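/- arXiv:0901.1534 — 4 statements merged into one kernel-verified Lean document; each statement's English description precedes it below -/
import Mathlib

section
/- For the line graph algebra L_n, evaluating the Hilbert series at t = 1/2 yields H_{L_n}(1/2) = F_{n+2}, where F_k denotes the Fibonacci numbers with F_0 = F_1 = 1. -/
open PowerSeries

/-- The dimension of the `i`-th graded piece of `k[x]/I`. -/
noncomputable def hilbertCoeff {k : Type} [Field k] {σ : Type} (I : Ideal (MvPolynomial σ k))
    (i : ℕ) : ℕ :=
  Module.finrank k
    ((MvPolynomial.homogeneousSubmodule σ k i).map (Ideal.Quotient.mkₐ k I).toLinearMap)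

/-- The Hilbert series of `k[x]/I`, as a formal power series with rational coefficients. -/
noncomputable def hilbertSeries {k : Type} [Field k] {σ : Type} (I : Ideal (MvPolynomial σ k)) :
    PowerSeries ℚ :=
  PowerSeries.mk fun i => (hilbertCoeff I i : ℚ)

/-- The edge ideal of a graph. -/
noncomputable def edgeIdeal (k : Type) [Field k] {V : Type} (G : SimpleGraph V) : Ideal (MvPolynomial V k) :=
  Ideal.span {m | ∃ a b, G.Adj a b ∧ m = MvPolynomial.X a * MvPolynomial.X b}

/-- The line graph on `n+1` vertices, with edges `{i, i+1}` for `0 ≤ i < n`. -/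
def lineGraph (n : ℕ) : SimpleGraph (Fin (n + 1)) :=
  SimpleGraph.fromRel fun i j => (i : ℕ) + 1 = (j : ℕ)

/-- The cycle graph on `n` vertices, with edges `{i, i+1 mod n}`. -/
def cycleGraph (n : ℕ) : SimpleGraph (Fin n) :=
  SimpleGraph.fromRel fun i j => ((i : ℕ) + 1) % n = (j : ℕ)

/-- The Hilbert series of the line graph algebra `L_n = k[x_1,…,x_{n+1}]/(x_1x_2,…,x_nx_{n+1})`. -/
noncomputable def lineSeries (k : Type) [Field k] (n : ℕ) : PowerSeries ℚ :=
  hilbertSeries (edgeIdeal k (lineGraph n))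

/-- The Hilbert series of the cycle graph algebra
`C_n = k[x_1,…,x_n]/(x_1x_2,…,x_{n-1}x_n,x_nx_1)`. -/
noncomputable def cycleSeries (k : Type) [Field k] (n : ℕ) : PowerSeries ℚ :=
  hilbertSeries (edgeIdeal k (cycleGraph n))

/-!
`L_n` is the quotient by a monomial ideal, so its degree-`i` part has a basis of standard
monomials: the exponent vectors `d` of degree `i` whose support is an independent set of the
path `x_1 - x_2 - ⋯ - x_{n+1}`. Hence `H_{L_n}(1/2) = ∑_d 2^{-|d|}` over all such `d`, a sum
taken in `ℝ≥0∞` so that it may be regrouped freely. Splitting off the first coordinate: if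
`d_1 = 0` the rest is any such vector on the path with one vertex fewer; if `d_1 = e + 1` then
`d_2 = 0`, and the choices of `e` contribute `∑_e 2^{-(e+1)} = 1` times the sum for the path with
two vertices fewer. So these sums satisfy the Fibonacci recursion.
-/

open scoped ENNReal

-- For infinite `σ` both sides can be `0`, the junk value of `finrank` and `Nat.card` in
-- infinite dimension.
theorem hilbertCoeff_span_monomial {k : Type} [Field k] {σ : Type} (S : Set (σ →₀ ℕ))
    (i : ℕ) :
    hilbertCoeff (Ideal.span ((fun s => MvPolynomial.monomial s (1 : k)) '' S)) i =
      Nat.card {d : σ →₀ ℕ // d.degree = i ∧ ∀ s ∈ S, ¬ s ≤ d} := by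
  set I := Ideal.span ((fun s => MvPolynomial.monomial s (1 : k)) '' S)
  set φ := (Ideal.Quotient.mkₐ k I).toLinearMap
  set std : Set (σ →₀ ℕ) := {d | d.degree = i ∧ ∀ s ∈ S, ¬ s ≤ d}
  set nonstd : Set (σ →₀ ℕ) := {d | d.degree = i ∧ ∃ s ∈ S, s ≤ d}
  have mem_ker {p} : p ∈ LinearMap.ker φ ↔ ∀ d ∈ p.support, ∃ s ∈ S, s ≤ d := by
    rw [LinearMap.mem_ker, ← MvPolynomial.mem_ideal_span_monomial_image]
    exact Ideal.Quotient.eq_zero_iff_mem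
  have homogeneous_eq : MvPolynomial.homogeneousSubmodule σ k i =
      AddMonoidAlgebra.supported k k std ⊔ AddMonoidAlgebra.supported k k nonstd := by
    simp only [MvPolynomial.homogeneousSubmodule_eq_finsupp_supported,
      AddMonoidAlgebra.supported_eq_span_single, ← Submodule.span_union, ← Set.image_union]
    congr 2
    ext d
    simp only [Set.mem_ofPred_eq, Set.mem_union, std, nonstd, ← and_or_left]
    grind
  have map_nonstd : (AddMonoidAlgebra.supported k k nonstd).map φ = ⊥ := by
    rw [← LinearMap.le_ker_iff_map]
    exact fun p hp => mem_ker.2 fun d hd => (hp hd).2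
  have disjoint_std : Disjoint (AddMonoidAlgebra.supported k k std) (LinearMap.ker φ) := by
    rw [Submodule.disjoint_def]
    intro p hpT hpI
    ext d
    by_contra hd
    obtain ⟨s, hs, hsd⟩ := (mem_ker.1 hpI) d (MvPolynomial.mem_support_iff.2 hd)
    exact (hpT (MvPolynomial.mem_support_iff.2 hd)).2 s hs hsd
  rw [hilbertCoeff, homogeneous_eq, Submodule.map_sup, map_nonstd, sup_bot_eq,
    ← LinearMap.range_domRestrict,
    LinearMap.finrank_range_of_inj (LinearMap.injective_domRestrict_iff.2 disjoint_std),
    (AddMonoidAlgebra.supportedEquivFinsupp std).finrank_eq,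
    Module.finrank_eq_nat_card_basis (Finsupp.basisSingleOne)]
  rfl

section EdgeIdeal

variable {k : Type} [Field k] {V : Type} (G : SimpleGraph V)

theorem edgeIdeal_eq_span_monomial :
    edgeIdeal k G = Ideal.span ((fun s => MvPolynomial.monomial s (1 : k)) ''
      {s | ∃ a b, G.Adj a b ∧ s = Finsupp.single a 1 + Finsupp.single b 1}) := by
  rw [edgeIdeal]
  congr 1
  ext m
  simp only [Set.mem_image, Set.mem_ofPred_eq]
  constructor
  · rintro ⟨a, b, hab, rfl⟩
    exact ⟨_, ⟨a, b, hab, rfl⟩, by simp [MvPolynomial.X, MvPolynomial.monomial_mul]⟩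
  · rintro ⟨_, ⟨a, b, hab, rfl⟩, rfl⟩
    exact ⟨a, b, hab, by simp [MvPolynomial.X, MvPolynomial.monomial_mul]⟩

theorem Finsupp.single_one_add_single_one_le_iff {a b : V} (hab : a ≠ b) {d : V →₀ ℕ} :
    Finsupp.single a 1 + Finsupp.single b 1 ≤ d ↔ d a ≠ 0 ∧ d b ≠ 0 := by
  classical
  constructor
  · intro h
    have ha := h a
    have hb := h b
    simp [hab, hab.symm] at ha hb
    omega
  · rintro ⟨ha, hb⟩ x
    simp only [Finsupp.add_apply, Finsupp.single_apply]
    split_ifs <;> grind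

theorem SimpleGraph.isIndepSet_support_iff {f : V → ℕ} :
    G.IsIndepSet (Function.support f) ↔ ∀ a b, G.Adj a b → f a = 0 ∨ f b = 0 := by
  simp only [SimpleGraph.isIndepSet_iff, Set.Pairwise, Function.mem_support]
  refine ⟨fun h a b hab => ?_, fun h a ha b hb _ hab => ?_⟩
  · by_contra! hne
    exact h hne.1 hne.2 hab.ne hab
  · rcases h a b hab with h' | h' <;> contradiction

theorem hilbertCoeff_edgeIdeal (i : ℕ) :
    hilbertCoeff (edgeIdeal k G) i =
      Nat.card {d : V →₀ ℕ // d.degree = i ∧ G.IsIndepSet (Function.support d)} := by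
  rw [edgeIdeal_eq_span_monomial, hilbertCoeff_span_monomial]
  congr! 4 with d
  simp only [Set.mem_ofPred_eq, forall_exists_index, and_imp, G.isIndepSet_support_iff]
  constructor
  · intro h a b hab
    by_contra! hne
    exact h _ a b hab rfl ((Finsupp.single_one_add_single_one_le_iff hab.ne).2 hne)
  · rintro h _ a b hab rfl hle
    rcases h a b hab with h0 | h0 <;>
      simp [h0, Finsupp.single_one_add_single_one_le_iff hab.ne] at hle

end EdgeIdeal

theorem ENNReal.tsum_natCard_fiber_mul_pow {α : Type*} (g : α → ℕ) (p : α → Prop)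
    [DecidablePred p] (hg : ∀ i, {x | g x = i}.Finite) (c : ℝ≥0∞) :
    ∑' i, (Nat.card {x // g x = i ∧ p x} : ℝ≥0∞) * c ^ i =
      ∑' x, if p x then c ^ g x else 0 := by
  rw [← (Equiv.sigmaFiberEquiv g).tsum_eq, ENNReal.tsum_sigma']
  refine tsum_congr fun i => ?_
  have : Finite {x // g x = i ∧ p x} := ((hg i).subset fun x hx => hx.1).to_subtype
  calc (Nat.card {x // g x = i ∧ p x} : ℝ≥0∞) * c ^ i
      = ∑' x : {x // g x = i}, if p x then c ^ i else 0 := by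
        rw [← ENat.toENNReal_coe, ← ENat.card_eq_coe_natCard, ← ENNReal.tsum_const,
          ← (Equiv.subtypeSubtypeEquivSubtypeInter (g · = i) p).tsum_eq (fun _ => c ^ i)]
        exact (tsum_subtype {x : {x // g x = i} | p x} fun _ => c ^ i).trans
          (by simp [Set.indicator_apply])
    _ = _ := tsum_congr fun x => by simp only [Equiv.sigmaFiberEquiv_apply, x.2]

open Classical in
theorem tsum_hilbertCoeff_edgeIdeal_mul_pow {k : Type} [Field k] {V : Type} [Fintype V]
    (G : SimpleGraph V) (c : ℝ≥0∞) :
    ∑' i, (hilbertCoeff (edgeIdeal k G) i : ℝ≥0∞) * c ^ i =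
      ∑' f : V → ℕ, if G.IsIndepSet (Function.support f) then c ^ ∑ v, f v else 0 := by
  simp_rw [hilbertCoeff_edgeIdeal]
  rw [ENNReal.tsum_natCard_fiber_mul_pow _ _ Finsupp.finite_of_degree_eq,
    ← Finsupp.equivFunOnFinite.symm.tsum_eq]
  simp [Finsupp.degree_eq_sum]

theorem ENNReal.tsum_fin_cons {β : Type*} {m : ℕ} (F : (Fin (m + 1) → β) → ℝ≥0∞) :
    ∑' f, F f = ∑' (x) (g : Fin m → β), F (Fin.cons x g) := by
  rw [← (Fin.consEquiv fun _ => β).tsum_eq, ENNReal.tsum_prod']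
  rfl

section PathGraph

open SimpleGraph

theorem pathGraph_isIndepSet_support_cons_zero {m : ℕ} {g : Fin m → ℕ} :
    (pathGraph (m + 1)).IsIndepSet (Function.support (Fin.cons 0 g : Fin (m + 1) → ℕ)) ↔
      (pathGraph m).IsIndepSet (Function.support g) := by
  simp [isIndepSet_support_iff, pathGraph_adj, Fin.forall_fin_succ]

theorem pathGraph_isIndepSet_support_cons {m : ℕ} {x : ℕ} {g : Fin (m + 1) → ℕ} :
    (pathGraph (m + 2)).IsIndepSet (Function.support (Fin.cons x g : Fin (m + 2) → ℕ)) ↔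
      (x = 0 ∨ g 0 = 0) ∧ (pathGraph (m + 1)).IsIndepSet (Function.support g) := by
  simp [isIndepSet_support_iff, pathGraph_adj, Fin.forall_fin_succ]
  tauto

open Classical in
noncomputable def pathWeight (m : ℕ) : ℝ≥0∞ :=
  ∑' f : Fin m → ℕ,
    if (pathGraph m).IsIndepSet (Function.support f) then 2⁻¹ ^ ∑ j, f j else 0

theorem pathWeight_zero : pathWeight 0 = 1 := by
  rw [pathWeight, tsum_eq_single finZeroElim fun f hf => (hf (Subsingleton.elim _ _)).elim]
  simp [isIndepSet_support_iff]

theorem pathWeight_one : pathWeight 1 = 2 := by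
  rw [pathWeight, ← (Equiv.funUnique (Fin 1) ℕ).symm.tsum_eq]
  simp [isIndepSet_support_iff, pathGraph_adj, ENNReal.tsum_geometric, ENNReal.one_sub_inv_two]

open Classical in
theorem tsum_head_eq_zero_eq_pathWeight (m : ℕ) :
    ∑' g : Fin (m + 1) → ℕ,
      (if g 0 = 0 ∧ (pathGraph (m + 1)).IsIndepSet (Function.support g)
        then (2⁻¹ : ℝ≥0∞) ^ ∑ j, g j else 0) = pathWeight m := by
  rw [ENNReal.tsum_fin_cons, tsum_eq_single 0 fun x hx => by simp [hx]]
  simp only [pathGraph_isIndepSet_support_cons_zero]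
  simp [pathWeight]

theorem pathWeight_add_two (m : ℕ) : pathWeight (m + 2) = pathWeight (m + 1) + pathWeight m := by
  rw [pathWeight, ENNReal.tsum_fin_cons, tsum_eq_zero_add' ENNReal.summable]
  congr 1
  · refine tsum_congr fun g => ?_
    rw [pathGraph_isIndepSet_support_cons_zero (m := m + 1)]
    simp
  · calc _ = ∑' x : ℕ, 2⁻¹ ^ (x + 1) * pathWeight m := by
          refine tsum_congr fun x => ?_
          rw [← tsum_head_eq_zero_eq_pathWeight, ← ENNReal.tsum_mul_left]
          refine tsum_congr fun g => ?_
          rw [pathGraph_isIndepSet_support_cons, or_iff_right x.succ_ne_zero]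
          simp [Fin.sum_cons, pow_add, mul_ite]
      _ = pathWeight m := by
          rw [ENNReal.tsum_mul_right, ENNReal.tsum_geometric_add_one, ENNReal.one_sub_inv_two,
            inv_inv, ENNReal.inv_mul_cancel two_ne_zero ENNReal.ofNat_ne_top, one_mul]

theorem pathWeight_eq_fib : ∀ m, pathWeight m = Nat.fib (m + 2)
  | 0 => by simp [pathWeight_zero]
  | 1 => by norm_num [pathWeight_one, Nat.fib_add_two]
  | m + 2 => by
    rw [pathWeight_add_two, pathWeight_eq_fib (m + 1), pathWeight_eq_fib m,
      Nat.fib_add_two (n := m + 2)]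
    push_cast
    ring

end PathGraph

theorem lineGraph_eq_pathGraph (n : ℕ) : lineGraph n = SimpleGraph.pathGraph (n + 1) := by
  ext a b
  simp only [lineGraph, SimpleGraph.fromRel_adj, SimpleGraph.pathGraph_adj]
  omega

-- The paper's `F_m` is `Nat.fib (m + 1)`.
/-- Evaluating the Hilbert series of `L_n` at `t = 1/2` yields `F_{n+2}`, where the
Fibonacci numbers are normalized by `F_0 = F_1 = 1` (so `F_m = Nat.fib (m+1)`). -/
theorem lineSeries_eval_half (k : Type) [Field k] (n : ℕ) :
    ∑' i : ℕ, (hilbertCoeff (edgeIdeal k (lineGraph n)) i : ℝ) * (1 / 2) ^ i =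
      Nat.fib (n + 3) := by
  have h : ∑' i : ℕ, (hilbertCoeff (edgeIdeal k (lineGraph n)) i : ℝ≥0∞) * 2⁻¹ ^ i =
      Nat.fib (n + 3) := by
    rw [tsum_hilbertCoeff_edgeIdeal_mul_pow, lineGraph_eq_pathGraph, ← pathWeight_eq_fib]
    rfl
  have h_real := congrArg ENNReal.toReal h
  rw [ENNReal.tsum_toReal_eq fun i => by finiteness] at h_real
  simpa using h_real
end

section
/- Let W_n be the wheel graph on n+1 vertices and C_n the cycle on n vertices. For j > i+1 the graded Betti numbers of the Stanley–Reisner rings satisfy β_{i,j}(W_n) = β_{i,j}(C_n) + β_{i-1,j-1}(C_n). -/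
open Finset

/-- The faces of the independence complex of a graph `G`: the finite independent sets. -/
def indepFaces {V : Type} (G : SimpleGraph V) : Set (Finset V) :=
  {s | ∀ a ∈ s, ∀ b ∈ s, ¬G.Adj a b}

/-- The space of simplicial `ℚ`-chains of the independence complex of `G` spanned by the
faces with exactly `i` vertices (for `i = 0` this is spanned by the empty face, so the
associated homology is reduced homology). -/
abbrev chains {V : Type} (G : SimpleGraph V) (i : ℕ) : Type :=
  {s : Finset V // s ∈ indepFaces G ∧ s.card = i} →₀ ℚ

/-- The simplicial boundary map of the independence complex of `G`, from chains on faces with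
`i+1` vertices to chains on faces with `i` vertices, with the usual alternating signs coming
from the linear order on the vertices. -/
noncomputable def bdry {V : Type} [DecidableEq V] [LinearOrder V] (G : SimpleGraph V)
    (i : ℕ) : chains G (i + 1) →ₗ[ℚ] chains G i :=
  Finsupp.lsum ℚ fun s => LinearMap.toSpanSingleton ℚ _
    (∑ a ∈ s.1.attach,
      ((-1 : ℚ) ^ (s.1.filter fun b => b < a.1).card) •
        Finsupp.single
          ⟨s.1.erase a.1,
            ⟨fun x hx y hy =>
              s.2.1 x (Finset.mem_of_mem_erase hx) y (Finset.mem_of_mem_erase hy),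
             by simp [Finset.card_erase_of_mem a.2, s.2.2]⟩⟩
          (1 : ℚ))

/-- The `j`-th reduced simplicial homology (with `ℚ`-coefficients) of the independence
complex of `G`: cycles supported on faces with `j+1` vertices modulo boundaries. -/
noncomputable abbrev redHomology {V : Type} [DecidableEq V] [LinearOrder V] (G : SimpleGraph V)
    (j : ℕ) : Type :=
  LinearMap.ker (bdry G j) ⧸
    (LinearMap.range (bdry G (j + 1))).comap (LinearMap.ker (bdry G j)).subtype

/-- The wheel graph on `n+1` vertices: vertex `0` is the center, adjacent to every other
vertex, and the vertices `1,…,n` form an `n`-cycle. -/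
def wheelGraph (n : ℕ) : SimpleGraph (Fin (n + 1)) :=
  SimpleGraph.fromRel fun a b =>
    a = 0 ∨ ∃ i j : Fin n, a = i.succ ∧ b = j.succ ∧ ((i : ℕ) + 1) % n = (j : ℕ)

/-- The graded Betti numbers of the Stanley–Reisner ring of the independence complex of `G`
(i.e. of the edge ideal of `G`), given by Hochster's formula:
`β_{i,j} = Σ_{S ⊆ V, |S| = j} dim_ℚ H̃_{j-i-1}(Δ_{G[S]})`. -/
noncomputable def bettiNumber {V : Type} [Fintype V] [DecidableEq V] [LinearOrder V]
    (G : SimpleGraph V) (i j : ℕ) : ℕ :=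
  ∑ S ∈ Finset.univ.filter fun S : Finset V => S.card = j,
    Module.finrank ℚ (redHomology (G.induce (S : Set V)) (j - i - 1))

set_option linter.unusedSectionVars false

section Transfer

variable {V W : Type} [DecidableEq V] [LinearOrder V] [DecidableEq W] [LinearOrder W]
variable (G : SimpleGraph V) (H : SimpleGraph W) (f : V ↪ W) (hf : StrictMono f)
variable (hface : ∀ s : Finset V, s ∈ indepFaces G ↔ s.map f ∈ indepFaces H)

def faceMap (i : ℕ) (s : {s : Finset V // s ∈ indepFaces G ∧ s.card = i}) :
    {t : Finset W // t ∈ indepFaces H ∧ t.card = i} :=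
  ⟨s.1.map f, (hface s.1).1 s.2.1, by simp [s.2.2]⟩

lemma faceMap_injective (i : ℕ) : Function.Injective (faceMap G H f hface i) := by
  intro s t h
  apply Subtype.ext
  have := congrArg Subtype.val h
  simpa [faceMap, Finset.map_inj] using this

noncomputable def chainMap (i : ℕ) : chains G i →ₗ[ℚ] chains H i :=
  Finsupp.lmapDomain ℚ ℚ (faceMap G H f hface i)

lemma chainMap_single (i : ℕ) (x : {s : Finset V // s ∈ indepFaces G ∧ s.card = i}) (c : ℚ) :
    chainMap G H f hface i (Finsupp.single x c) = Finsupp.single (faceMap G H f hface i x) c := by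
  simp [chainMap, Finsupp.lmapDomain_apply, Finsupp.mapDomain_single]

lemma chainMap_injective (i : ℕ) : Function.Injective (chainMap G H f hface i) :=
  fun _ _ h => Finsupp.mapDomain_injective (faceMap_injective G H f hface i) h

include hf in
lemma filter_lt_map_card (s : Finset V) (a : V) :
    ((s.map f).filter fun b => b < f a).card = (s.filter fun b => b < a).card := by
  rw [Finset.filter_map]
  rw [Finset.card_map]
  congr 1
  apply Finset.filter_congr
  intro b _
  simp [hf.lt_iff_lt]

include hf in
lemma bdry_comm (i : ℕ) :
    (bdry H i).comp (chainMap G H f hface (i + 1)) =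
      (chainMap G H f hface i).comp (bdry G i) := by
  apply Finsupp.lhom_ext
  intro s c
  simp only [LinearMap.comp_apply]
  have h1 : chainMap G H f hface (i + 1) (Finsupp.single s c)
      = Finsupp.single (faceMap G H f hface (i + 1) s) c := by
    simp [chainMap, Finsupp.lmapDomain_apply, Finsupp.mapDomain_single]
  rw [h1]
  rw [bdry, bdry, Finsupp.lsum_single, Finsupp.lsum_single,
    LinearMap.toSpanSingleton_apply, LinearMap.toSpanSingleton_apply, map_smul]
  congr 1
  rw [map_sum]
  refine (Finset.sum_bij (fun (a : {x // x ∈ s.1}) (_ : a ∈ s.1.attach) =>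
      (⟨f a.1, Finset.mem_map_of_mem f a.2⟩ :
      {x // x ∈ (faceMap G H f hface (i+1) s).1})) (fun a _ => Finset.mem_attach _ _)
    (fun a _ b _ h => ?_) (fun b _ => ?_) (fun a _ => ?_)).symm
  · ext
    exact f.injective (congrArg Subtype.val h)
  · have hb : b.1 ∈ s.1.map f := b.2
    obtain ⟨a, ha, hfa⟩ := Finset.mem_map.1 hb
    exact ⟨⟨a, ha⟩, Finset.mem_attach _ _, Subtype.ext hfa⟩
  · rw [map_smul]
    have hsign : ((faceMap G H f hface (i+1) s).1.filter fun b => b < f a.1).card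
        = (s.1.filter fun b => b < a.1).card := filter_lt_map_card f hf s.1 a.1
    rw [hsign]
    rw [chainMap_single]
    have hidx : (faceMap G H f hface i ⟨s.1.erase a.1,
        fun x hx y hy => s.2.1 x (Finset.mem_of_mem_erase hx) y (Finset.mem_of_mem_erase hy),
        by simp [Finset.card_erase_of_mem a.2, s.2.2]⟩ :
        {t : Finset W // t ∈ indepFaces H ∧ t.card = i}).1
        = (faceMap G H f hface (i+1) s).1.erase (f a.1) := Finset.map_erase f s.1 a.1
    congr 1
    refine congr_arg₂ (Finsupp.single (M := ℚ)) ?_ rfl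
    apply Subtype.ext
    exact hidx

variable (hsurj : ∀ t : Finset W, t ∈ indepFaces H → 2 ≤ t.card → ∃ s : Finset V, s.map f = t)

noncomputable def faceEquiv (i : ℕ) (hi : 2 ≤ i) :
    {s : Finset V // s ∈ indepFaces G ∧ s.card = i} ≃
      {t : Finset W // t ∈ indepFaces H ∧ t.card = i} :=
  Equiv.ofBijective (faceMap G H f hface i)
    ⟨faceMap_injective G H f hface i, by
      rintro ⟨t, ht, hc⟩
      obtain ⟨s, hs⟩ := hsurj t ht (by omega)
      refine ⟨⟨s, (hface s).2 (hs ▸ ht), ?_⟩, Subtype.ext hs⟩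
      have := congrArg Finset.card hs
      simpa using this.trans hc⟩

noncomputable def chainEquiv (i : ℕ) (hi : 2 ≤ i) : chains G i ≃ₗ[ℚ] chains H i :=
  Finsupp.domLCongr (faceEquiv G H f hface hsurj i hi)

lemma chainEquiv_apply (i : ℕ) (hi : 2 ≤ i) (x : chains G i) :
    chainEquiv G H f hface hsurj i hi x = chainMap G H f hface i x := by
  simp [chainEquiv, Finsupp.domLCongr_apply, Finsupp.domCongr_apply,
    Finsupp.equivMapDomain_eq_mapDomain, chainMap, Finsupp.lmapDomain_apply,
    faceEquiv, Equiv.ofBijective]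

include hf hface hsurj in
theorem finrank_redHomology_eq (d : ℕ) (hd : 1 ≤ d) :
    Module.finrank ℚ (redHomology G d) = Module.finrank ℚ (redHomology H d) := by
  have h1 : 2 ≤ d + 1 := by omega
  have h2 : 2 ≤ d + 2 := by omega
  set e := chainEquiv G H f hface hsurj (d + 1) h1 with he
  have ecomm : ∀ x, bdry H d (e x) = chainMap G H f hface d (bdry G d x) := by
    intro x
    rw [he, chainEquiv_apply]
    exact DFunLike.congr_fun (bdry_comm G H f hf hface d) x
  have ecomm2 : ∀ y : chains G (d + 2),
      bdry H (d + 1) (chainEquiv G H f hface hsurj (d + 2) h2 y) = e (bdry G (d + 1) y) := by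
    intro y
    rw [he, chainEquiv_apply, chainEquiv_apply]
    exact DFunLike.congr_fun (bdry_comm G H f hf hface (d + 1)) y
  have hinj := chainMap_injective G H f hface d
  have claimA : LinearMap.ker (bdry H d)
      = (LinearMap.ker (bdry G d)).map (e : chains G (d+1) →ₗ[ℚ] chains H (d+1)) := by
    ext x
    constructor
    · intro hx
      refine Submodule.mem_map.2 ⟨e.symm x, ?_, e.apply_symm_apply x⟩
      rw [LinearMap.mem_ker]
      apply hinj
      rw [map_zero, ← ecomm, e.apply_symm_apply]
      exact LinearMap.mem_ker.1 hx
    · rintro ⟨y, hy, rfl⟩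
      rw [LinearMap.mem_ker]
      show bdry H d (e y) = 0
      rw [ecomm, LinearMap.mem_ker.1 hy, map_zero]
  have claimB : LinearMap.range (bdry H (d + 1))
      = (LinearMap.range (bdry G (d + 1))).map (e : chains G (d+1) →ₗ[ℚ] chains H (d+1)) := by
    ext x
    constructor
    · rintro ⟨z, rfl⟩
      refine Submodule.mem_map.2 ⟨bdry G (d+1) ((chainEquiv G H f hface hsurj (d+2) h2).symm z),
        LinearMap.mem_range_self _ _, ?_⟩
      show e _ = _
      rw [← ecomm2, (chainEquiv G H f hface hsurj (d+2) h2).apply_symm_apply]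
    · rintro ⟨y, ⟨z, rfl⟩, rfl⟩
      exact ⟨chainEquiv G H f hface hsurj (d+2) h2 z, ecomm2 z⟩
  let eK : (LinearMap.ker (bdry G d)) ≃ₗ[ℚ] (LinearMap.ker (bdry H d)) :=
    (e.submoduleMap (LinearMap.ker (bdry G d))).trans (LinearEquiv.ofEq _ _ claimA.symm)
  have eK_apply : ∀ y : LinearMap.ker (bdry G d), (eK y : chains H (d+1)) = e y.1 := by
    intro y
    simp [eK, LinearEquiv.submoduleMap_apply]
  have hpq : ((LinearMap.range (bdry G (d + 1))).comap
        (LinearMap.ker (bdry G d)).subtype).map (eK : _ →ₗ[ℚ] _)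
      = (LinearMap.range (bdry H (d + 1))).comap (LinearMap.ker (bdry H d)).subtype := by
    ext x
    constructor
    · rintro ⟨y, hy, rfl⟩
      have : ((eK y : LinearMap.ker (bdry H d)) : chains H (d+1)) = e y.1 := eK_apply y
      rw [Submodule.mem_comap]
      show ((eK y : LinearMap.ker (bdry H d)) : chains H (d+1)) ∈ _
      rw [this, claimB]
      exact Submodule.mem_map_of_mem hy
    · intro hx
      have hx' : (x : chains H (d+1)) ∈ LinearMap.range (bdry H (d+1)) := hx
      rw [claimB] at hx'
      obtain ⟨z, hz, hez⟩ := Submodule.mem_map.1 hx'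
      have hez' : e z = (x : chains H (d+1)) := hez
      have hzker : z ∈ LinearMap.ker (bdry G d) := by
        rw [LinearMap.mem_ker]
        apply hinj
        rw [map_zero, ← ecomm, hez']
        exact LinearMap.mem_ker.1 x.2
      refine ⟨⟨z, hzker⟩, hz, ?_⟩
      apply Subtype.ext
      exact (eK_apply ⟨z, hzker⟩).trans hez'
  exact LinearEquiv.finrank_eq (Submodule.Quotient.equiv _ _ eK hpq)

end Transfer

section Wheel

lemma exists_finset_preimage {α β : Type} [DecidableEq α] [DecidableEq β] (f : α ↪ β) :
    ∀ t : Finset β, (∀ b ∈ t, ∃ a, f a = b) → ∃ s : Finset α, s.map f = t := by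
  intro t
  induction t using Finset.induction_on with
  | empty => exact fun _ => ⟨∅, rfl⟩
  | @insert b t hb ih =>
    intro h
    obtain ⟨a, ha⟩ := h b (Finset.mem_insert_self b t)
    obtain ⟨s, hs⟩ := ih fun x hx => h x (Finset.mem_insert_of_mem hx)
    exact ⟨insert a s, by rw [Finset.map_insert, hs, ha]⟩

lemma wheel_adj_succ (n : ℕ) (a b : Fin n) :
    (wheelGraph n).Adj a.succ b.succ ↔ (cycleGraph n).Adj a b := by
  simp [wheelGraph, cycleGraph, SimpleGraph.fromRel_adj, Fin.succ_ne_zero,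
    Fin.succ_inj]

lemma wheel_adj_zero (n : ℕ) (b : Fin (n + 1)) (hb : b ≠ 0) :
    (wheelGraph n).Adj 0 b := by
  simp [wheelGraph, SimpleGraph.fromRel_adj, Ne.symm hb]

def succE (n : ℕ) : Fin n ↪ Fin (n + 1) := ⟨Fin.succ, Fin.succ_injective n⟩

end Wheel

section Cases

lemma zero_not_mem_map_succE (n : ℕ) (T : Finset (Fin n)) :
    (0 : Fin (n + 1)) ∉ T.map (succE n) := by
  simp only [Finset.mem_map, succE, Function.Embedding.coeFn_mk]
  rintro ⟨a, _, ha⟩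
  exact Fin.succ_ne_zero a ha

lemma caseA (n : ℕ) (T : Finset (Fin n)) (d : ℕ) (hd : 1 ≤ d) :
    Module.finrank ℚ (redHomology ((cycleGraph n).induce (T : Set (Fin n))) d)
      = Module.finrank ℚ (redHomology
        ((wheelGraph n).induce ((T.map (succE n) : Finset (Fin (n + 1))) : Set (Fin (n + 1)))) d) := by
  let f : {x // x ∈ (T : Set (Fin n))} ↪ {x // x ∈ ((T.map (succE n)) : Set (Fin (n + 1)))} :=
    ⟨fun x => ⟨Fin.succ x.1, by
        simp only [Finset.coe_map, Set.mem_image, Finset.mem_coe]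
        exact ⟨x.1, x.2, rfl⟩⟩,
     fun x y h => Subtype.ext (Fin.succ_injective n (congrArg Subtype.val h))⟩
  have hf : StrictMono f := by
    intro x y h
    exact Fin.succ_lt_succ_iff.2 h
  have hface : ∀ s : Finset {x // x ∈ (T : Set (Fin n))},
      s ∈ indepFaces ((cycleGraph n).induce (T : Set (Fin n))) ↔
        s.map f ∈ indepFaces ((wheelGraph n).induce
          ((T.map (succE n) : Finset (Fin (n + 1))) : Set (Fin (n + 1)))) := by
    intro s
    constructor
    · intro hs a ha b hb hadj
      obtain ⟨a', ha', rfl⟩ := Finset.mem_map.1 ha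
      obtain ⟨b', hb', rfl⟩ := Finset.mem_map.1 hb
      exact hs a' ha' b' hb' ((wheel_adj_succ n a'.1 b'.1).1 hadj)
    · intro hs a ha b hb hadj
      exact hs (f a) (Finset.mem_map_of_mem f ha) (f b) (Finset.mem_map_of_mem f hb)
        ((wheel_adj_succ n a.1 b.1).2 hadj)
  have hsurj : ∀ t : Finset {x // x ∈ ((T.map (succE n)) : Set (Fin (n + 1)))},
      t ∈ indepFaces ((wheelGraph n).induce
          ((T.map (succE n) : Finset (Fin (n + 1))) : Set (Fin (n + 1)))) →
        2 ≤ t.card → ∃ s : Finset {x // x ∈ (T : Set (Fin n))}, s.map f = t := by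
    intro t _ _
    apply exists_finset_preimage
    intro b _
    have hb : b.1 ∈ T.map (succE n) := b.2
    obtain ⟨a, ha, hab⟩ := Finset.mem_map.1 hb
    exact ⟨⟨a, ha⟩, Subtype.ext hab⟩
  exact finrank_redHomology_eq _ _ f hf hface hsurj d hd

lemma caseB (n : ℕ) (T : Finset (Fin n)) (d : ℕ) (hd : 1 ≤ d) :
    Module.finrank ℚ (redHomology ((cycleGraph n).induce (T : Set (Fin n))) d)
      = Module.finrank ℚ (redHomology
        ((wheelGraph n).induce
          ((insert (0 : Fin (n + 1)) (T.map (succE n)) : Finset (Fin (n + 1)))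
            : Set (Fin (n + 1)))) d) := by
  set S : Finset (Fin (n + 1)) := insert (0 : Fin (n + 1)) (T.map (succE n)) with hS
  let f : {x // x ∈ (T : Set (Fin n))} ↪ {x // x ∈ (S : Set (Fin (n + 1)))} :=
    ⟨fun x => ⟨Fin.succ x.1, by
        simp only [hS, Finset.coe_insert, Set.mem_insert_iff, Finset.coe_map,
          Set.mem_image, Finset.mem_coe]
        exact Or.inr ⟨x.1, x.2, rfl⟩⟩,
     fun x y h => Subtype.ext (Fin.succ_injective n (congrArg Subtype.val h))⟩
  have hf : StrictMono f := by
    intro x y h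
    exact Fin.succ_lt_succ_iff.2 h
  have hface : ∀ s : Finset {x // x ∈ (T : Set (Fin n))},
      s ∈ indepFaces ((cycleGraph n).induce (T : Set (Fin n))) ↔
        s.map f ∈ indepFaces ((wheelGraph n).induce (S : Set (Fin (n + 1)))) := by
    intro s
    constructor
    · intro hs a ha b hb hadj
      obtain ⟨a', ha', rfl⟩ := Finset.mem_map.1 ha
      obtain ⟨b', hb', rfl⟩ := Finset.mem_map.1 hb
      exact hs a' ha' b' hb' ((wheel_adj_succ n a'.1 b'.1).1 hadj)
    · intro hs a ha b hb hadj
      exact hs (f a) (Finset.mem_map_of_mem f ha) (f b) (Finset.mem_map_of_mem f hb)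
        ((wheel_adj_succ n a.1 b.1).2 hadj)
  have hsurj : ∀ t : Finset {x // x ∈ (S : Set (Fin (n + 1)))},
      t ∈ indepFaces ((wheelGraph n).induce (S : Set (Fin (n + 1)))) →
        2 ≤ t.card → ∃ s : Finset {x // x ∈ (T : Set (Fin n))}, s.map f = t := by
    intro t ht hcard
    apply exists_finset_preimage
    intro b hbt
    -- first: b.1 ≠ 0
    have hb0 : b.1 ≠ 0 := by
      intro hb0
      -- pick another element of t
      obtain ⟨c, hct, hcb⟩ : ∃ c ∈ t, c ≠ b := by
        by_contra hcon
        push_neg at hcon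
        have : t ⊆ {b} := fun x hx => Finset.mem_singleton.2 (hcon x hx)
        have := Finset.card_le_card this
        simp at this
        omega
      have hc0 : c.1 ≠ 0 := by
        intro h0
        exact hcb (Subtype.ext (h0.trans hb0.symm))
      exact ht b hbt c hct (by
        show (wheelGraph n).Adj b.1 c.1
        rw [hb0]
        exact wheel_adj_zero n c.1 hc0)
    have hb : b.1 ∈ S := b.2
    rcases Finset.mem_insert.1 hb with hb | hb
    · exact absurd hb hb0
    · obtain ⟨a, ha, hab⟩ := Finset.mem_map.1 hb
      exact ⟨⟨a, ha⟩, Subtype.ext hab⟩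
  exact finrank_redHomology_eq _ _ f hf hface hsurj d hd

end Cases


/-- For `j > i+1`, `β_{i,j}(W_n) = β_{i,j}(C_n) + β_{i-1,j-1}(C_n)`. -/
theorem betti_wheel (n : ℕ) (hn : 3 ≤ n) (i j : ℕ) (hi : 1 ≤ i) (hj : i + 1 < j) :
    bettiNumber (wheelGraph n) i j =
      bettiNumber (cycleGraph n) i j + bettiNumber (cycleGraph n) (i - 1) (j - 1) := by
  classical
  have hd : 1 ≤ j - i - 1 := by omega
  have harith : (j - 1) - (i - 1) - 1 = j - i - 1 := by omega
  unfold bettiNumber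
  rw [← Finset.sum_filter_add_sum_filter_not
    (Finset.univ.filter fun S : Finset (Fin (n + 1)) => S.card = j)
    (fun S => (0 : Fin (n + 1)) ∈ S)]
  have h1 : ∑ S ∈ (Finset.univ.filter fun S : Finset (Fin (n + 1)) => S.card = j).filter
        (fun S => ¬ (0 : Fin (n + 1)) ∈ S),
      Module.finrank ℚ (redHomology ((wheelGraph n).induce (S : Set (Fin (n + 1)))) (j - i - 1))
      = ∑ T ∈ Finset.univ.filter fun T : Finset (Fin n) => T.card = j,
      Module.finrank ℚ (redHomology ((cycleGraph n).induce (T : Set (Fin n))) (j - i - 1)) := by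
    refine (Finset.sum_bij (fun T _ => T.map (succE n)) ?_ ?_ ?_ ?_).symm
    · intro T hT
      simp only [Finset.mem_filter, Finset.mem_univ, true_and] at hT ⊢
      exact ⟨by rw [Finset.card_map, hT], zero_not_mem_map_succE n T⟩
    · intro T₁ _ T₂ _ h
      exact Finset.map_injective (succE n) h
    · intro S hS
      simp only [Finset.mem_filter, Finset.mem_univ, true_and] at hS
      obtain ⟨hcard, h0⟩ := hS
      obtain ⟨T, hT⟩ := exists_finset_preimage (succE n) S (by
        intro b hb
        have hb0 : b ≠ 0 := fun h => h0 (h ▸ hb)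
        exact ⟨b.pred hb0, Fin.succ_pred b hb0⟩)
      refine ⟨T, ?_, hT⟩
      simp only [Finset.mem_filter, Finset.mem_univ, true_and]
      rw [← Finset.card_map (succE n), hT, hcard]
    · intro T _
      exact caseA n T (j - i - 1) hd
  have h2 : ∑ S ∈ (Finset.univ.filter fun S : Finset (Fin (n + 1)) => S.card = j).filter
        (fun S => (0 : Fin (n + 1)) ∈ S),
      Module.finrank ℚ (redHomology ((wheelGraph n).induce (S : Set (Fin (n + 1)))) (j - i - 1))
      = ∑ T ∈ Finset.univ.filter fun T : Finset (Fin n) => T.card = j - 1,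
      Module.finrank ℚ (redHomology ((cycleGraph n).induce (T : Set (Fin n))) (j - i - 1)) := by
    refine (Finset.sum_bij (fun T _ => insert (0 : Fin (n + 1)) (T.map (succE n))) ?_ ?_ ?_ ?_).symm
    · intro T hT
      simp only [Finset.mem_filter, Finset.mem_univ, true_and] at hT ⊢
      refine ⟨?_, Finset.mem_insert_self _ _⟩
      rw [Finset.card_insert_of_notMem (zero_not_mem_map_succE n T), Finset.card_map, hT]
      omega
    · intro T₁ _ T₂ _ h
      apply Finset.map_injective (succE n)
      have h₁ := Finset.erase_insert (zero_not_mem_map_succE n T₁)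
      have h₂ := Finset.erase_insert (zero_not_mem_map_succE n T₂)
      rw [← h₁, ← h₂]
      exact congrArg (fun s => Finset.erase s 0) h
    · intro S hS
      simp only [Finset.mem_filter, Finset.mem_univ, true_and] at hS
      obtain ⟨hcard, h0⟩ := hS
      obtain ⟨T, hT⟩ := exists_finset_preimage (succE n) (S.erase 0) (by
        intro b hb
        have hb0 : b ≠ 0 := Finset.ne_of_mem_erase hb
        exact ⟨b.pred hb0, Fin.succ_pred b hb0⟩)
      refine ⟨T, ?_, ?_⟩
      · simp only [Finset.mem_filter, Finset.mem_univ, true_and]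
        rw [← Finset.card_map (succE n), hT, Finset.card_erase_of_mem h0, hcard]
      · show insert (0 : Fin (n + 1)) (T.map (succE n)) = S
        rw [hT, Finset.insert_erase h0]
    · intro T _
      exact caseB n T (j - i - 1) hd
  have h3 : ∀ d : ℕ, d = j - i - 1 →
      (∑ T ∈ Finset.univ.filter fun T : Finset (Fin n) => T.card = j - 1,
        Module.finrank ℚ (redHomology ((cycleGraph n).induce (T : Set (Fin n))) d))
      = ∑ T ∈ Finset.univ.filter fun T : Finset (Fin n) => T.card = j - 1,
        Module.finrank ℚ (redHomology ((cycleGraph n).induce (T : Set (Fin n))) (j - i - 1)) := by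
    intro d h
    subst h
    rfl
  rw [h1, h2, h3 _ harith, add_comm]
end

section
/- For n ≥ 1 and α ≥ 1, there is a graded ring isomorphism L_n^{2α,α}/(linear forms) ≅ k[x_1,...,x_{n+1}]/(x_1^α x_2^α, ..., x_n^α x_{n+1}^α), where the linear forms v_{ik} - v_{il} and v'_{ik} - v'_{il} form a regular sequence of length (n+1)(α-1) on L_n^{2α,α}. -/
set_option synthInstance.maxHeartbeats 1000000
open MvPolynomial

/-- The edge ideal of the hyperline `L_n^{2α,α}`: the vertices come in `n+1` blocks of size
`α` (block `i` consisting of the variables `v_{i1},…,v_{iα}`), and the `i`-th edge is the set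
of all `2α` vertices in blocks `i` and `i+1`, contributing the product of its variables. -/
noncomputable def hyperlineIdeal (k : Type) [Field k] (n α : ℕ) :
    Ideal (MvPolynomial (Fin (n + 1) × Fin α) k) :=
  Ideal.span (Set.range fun i : Fin n =>
    (∏ j : Fin α, X (i.castSucc, j)) * ∏ j : Fin α, X (i.succ, j))

/-- The differences `v_{ik} - v_{i1}` of variables within a block. -/
def blockDifferences (k : Type) [Field k] (n α : ℕ) (hα : 1 ≤ α) :
    Set (MvPolynomial (Fin (n + 1) × Fin α) k) :=
  {x | ∃ (i : Fin (n + 1)) (j : Fin α), j ≠ ⟨0, hα⟩ ∧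
    x = X (i, j) - X (i, (⟨0, hα⟩ : Fin α))}

/-!
Fix a base column `c`. For a set `Q` of vertices, substituting `X (i, c)` for `X p` (`p ∈ Q`,
`p` in block `i`) kills the block differences indexed by `Q` and is the identity modulo them.
Hence whether `X a - X (a.1, c)` (`a ∉ Q`) is a nonzerodivisor modulo the hyperline ideal plus
those differences can be tested after the substitution, where the hyperline ideal becomes a
monomial ideal. Each of its generators contains `X a` at most once, and contains it iff it
contains `X (a.1, c)`; modulo such a monomial ideal `X a - X (a.1, c)` is a nonzerodivisor, by
comparing coefficients. Quotienting by all block differences amounts to renaming every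
`X (i, j)` to `x_i`, which sends the edge monomials to `x_i ^ α * x_{i+1} ^ α`.
-/

theorem Finsupp.le_of_le_single_add {σ : Type*} {u m : σ →₀ ℕ} {s : σ}
    (h : u ≤ Finsupp.single s 1 + m) (hs : u s ≤ m s) : u ≤ m := by
  classical
  intro t
  by_cases ht : t = s
  · exact ht ▸ hs
  · simpa [Finsupp.single_apply, Ne.symm ht] using h t

namespace MvPolynomial

variable {R σ : Type*} [CommRing R]

theorem mem_span_monomial_of_X_sub_X_mul_mem [DecidableEq σ] {a b : σ} (hab : a ≠ b)
    {G : Set (σ →₀ ℕ)} (hG : ∀ u ∈ G, u a ≤ 1 ∧ (u a = 0 ↔ u b = 0)) {f : MvPolynomial σ R}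
    (hf : (X a - X b) * f ∈ Ideal.span ((monomial · 1) '' G)) :
    f ∈ Ideal.span ((monomial · (1 : R)) '' G) := by
  rw [mem_ideal_span_monomial_image] at hf ⊢
  have hfree : ∀ m : σ →₀ ℕ, m a = 0 → coeff m f ≠ 0 → ∃ u ∈ G, u ≤ m := by
    intro m hma hm
    have hw : coeff (Finsupp.single b 1 + m) ((X a - X b) * f) = -coeff m f := by
      rw [sub_mul, coeff_sub, coeff_X_mul, coeff_X_mul', if_neg (by simp [hab, hma])]
      ring
    obtain ⟨u, hu, hle⟩ := hf _ (mem_support_iff.mpr (hw ▸ neg_ne_zero.mpr hm))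
    have hua : u a = 0 := by simpa [hab, hma] using hle a
    exact ⟨u, hu, Finsupp.le_of_le_single_add hle (by simp [((hG u hu).2.mp hua)])⟩
  have hmain : ∀ m : σ →₀ ℕ, m a ≠ 0 → coeff m f ≠ 0 → ∃ u ∈ G, u ≤ m := by
    intro m
    induction hN : m b using Nat.strong_induction_on generalizing m with
    | _ N ih =>
      intro hma hm
      -- a generator below `X a * m` is already below `m`, since it contains `X a` at most once
      suffices ∃ u ∈ G, u ≤ Finsupp.single a 1 + m by
        obtain ⟨u, hu, hle⟩ := this
        exact ⟨u, hu, Finsupp.le_of_le_single_add hle ((hG u hu).1.trans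
          (Nat.one_le_iff_ne_zero.mpr hma))⟩
      by_cases hw : coeff (Finsupp.single a 1 + m) ((X a - X b) * f) = 0
      · rw [sub_mul, coeff_sub, coeff_X_mul, sub_eq_zero, coeff_X_mul'] at hw
        split_ifs at hw with hb
        · set m' := Finsupp.single a 1 + m - Finsupp.single b 1
          have hm'b : m' b < N := by
            simp [m', hab.symm] at hb ⊢
            omega
          obtain ⟨u, hu, hle⟩ := ih _ hm'b m' rfl (by simp [m', hab]) (hw ▸ hm)
          exact ⟨u, hu, hle.trans tsub_le_self⟩
        · exact absurd hw hm
      · exact hf _ (mem_support_iff.mpr hw)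
  intro m hm
  by_cases hma : m a = 0
  · exact hfree m hma (mem_support_iff.mp hm)
  · exact hmain m hma (mem_support_iff.mp hm)

theorem rename_sub_self_mem {v : σ → σ} {J : Ideal (MvPolynomial σ R)}
    (hv : ∀ p, X (v p) - X p ∈ J) (g : MvPolynomial σ R) : rename v g - g ∈ J := by
  rw [← Ideal.Quotient.eq, ← Ideal.Quotient.mkₐ_eq_mk R, ← AlgHom.comp_apply]
  congr 1
  refine algHom_ext fun p => ?_
  simpa [Ideal.Quotient.eq] using hv p

theorem prod_X_eq_monomial {ι : Type*} (s : Finset ι) (g : ι → σ) :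
    ∏ j ∈ s, (X (g j) : MvPolynomial σ R) = monomial (∑ j ∈ s, Finsupp.single (g j) 1) 1 := by
  rw [monomial_sum_one]
  rfl

end MvPolynomial

namespace Ideal

variable {A : Type*} [CommRing A]

theorem mem_sup_of_mul_mem_sup_of_retraction {I J : Ideal A} (S : A →+* A)
    (hJ : J ≤ RingHom.ker S) (hS : ∀ y, S y - y ∈ J) {x : A} (hx : S x = x)
    (hreg : ∀ g, x * g ∈ I.map S → g ∈ I.map S) {f : A} (hf : x * f ∈ I ⊔ J) : f ∈ I ⊔ J := by
  have hmapJ : J.map S = ⊥ := (map_eq_bot_iff_le_ker S).mpr hJ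
  have hSf : S f ∈ I.map S := hreg _ <| by
    simpa [map_sup, hmapJ, hx] using mem_map_of_mem S hf
  have hmapI : I.map S ≤ I ⊔ J := map_le_iff_le_comap.mpr fun i hi => by
    simpa using add_mem (mem_sup_left hi) (mem_sup_right (hS i))
  simpa using sub_mem (hmapI hSf) (mem_sup_right (hS f))

theorem isRegular_map_mk_of_mul_mem_sup (I : Ideal A) (rs : List A)
    (hreg : ∀ i (h : i < rs.length), ∀ f, rs[i] * f ∈ I ⊔ ofList (rs.take i) →
      f ∈ I ⊔ ofList (rs.take i))
    (hne : I ⊔ ofList rs ≠ ⊤) : RingTheory.Sequence.IsRegular (A ⧸ I) (rs.map (Quotient.mk I)) := by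
  refine ⟨⟨fun i hi => ?_⟩, fun htop => hne ?_⟩
  · rw [smul_eq_mul, mul_top, ← List.map_take, ← map_ofList,
      isSMulRegular_quotient_iff_mem_of_smul_mem]
    refine Quotient.mk_surjective.forall.mpr fun f => ?_
    simp only [smul_eq_mul, List.getElem_map, ← map_mul, mem_quotient_iff_mem_sup,
      sup_comm (a := ofList _)]
    exact hreg i (by simpa using hi) f
  · rw [smul_eq_mul, mul_top, ← map_ofList, eq_comm, eq_top_iff_one, ← map_one (Quotient.mk I),
      mem_quotient_iff_mem_sup] at htop
    rw [sup_comm, eq_top_iff_one]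
    exact htop

noncomputable def quotientSupKerEquiv {R B : Type*} [CommRing R] [CommRing B] [Algebra R A]
    [Algebra R B] (I : Ideal A) (φ : A →ₐ[R] B) (hφ : Function.Surjective φ) :
    (A ⧸ (I ⊔ RingHom.ker φ)) ≃ₐ[R] B ⧸ I.map φ :=
  (quotientEquivAlgOfEq R (by
    ext x
    simp [← comap_map_of_surjective' φ hφ, Quotient.eq_zero_iff_mem]))
    |>.trans (quotientKerAlgEquivOfSurjective (f := (Quotient.mkₐ R (I.map φ)).comp φ)
      ((Quotient.mkₐ_surjective R _).comp hφ))

end Ideal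

namespace Hyperline

variable (k : Type) [Field k] {n α : ℕ}

noncomputable def edgeMonomial (i : Fin n) : MvPolynomial (Fin (n + 1) × Fin α) k :=
  (∏ j : Fin α, X (i.castSucc, j)) * ∏ j : Fin α, X (i.succ, j)

theorem hyperlineIdeal_eq_span : hyperlineIdeal k n α = Ideal.span (Set.range (edgeMonomial k)) :=
  rfl

noncomputable def blockDiff (c : Fin α) (p : Fin (n + 1) × Fin α) :
    MvPolynomial (Fin (n + 1) × Fin α) k :=
  X p - X (p.1, c)

variable {k}

theorem blockDiff_injOn (c : Fin α) :
    Set.InjOn (blockDiff k c) {p : Fin (n + 1) × Fin α | p.2 ≠ c} := by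
  intro p (hp : p.2 ≠ c) q _ hpq
  have hq := congrArg (eval (Pi.single p (1 : k))) hpq
  simp [blockDiff, Pi.single_apply, Prod.ext_iff, Ne.symm hp] at hq
  exact Prod.ext hq.1.symm hq.2.symm

theorem blockDifferences_eq_image (hα : 1 ≤ α) :
    blockDifferences k n α hα = blockDiff k ⟨0, hα⟩ '' {p | p.2 ≠ ⟨0, hα⟩} := by
  ext x
  simp [blockDifferences, blockDiff, eq_comm]

theorem span_blockDifferences (hα : 1 ≤ α) :
    Ideal.span (blockDifferences k n α hα) = Ideal.span (Set.range (blockDiff k ⟨0, hα⟩)) := by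
  refine le_antisymm (Ideal.span_mono ?_) (Ideal.span_le.mpr ?_)
  · rw [blockDifferences_eq_image]
    exact Set.image_subset_range _ _
  · rintro _ ⟨p, rfl⟩
    by_cases hp : p.2 = ⟨0, hα⟩
    · simp [blockDiff, ← hp]
    · exact Ideal.subset_span (by rw [blockDifferences_eq_image]; exact ⟨p, hp, rfl⟩)

open Classical in
noncomputable def collapse (c : Fin α) (Q : Set (Fin (n + 1) × Fin α)) (p : Fin (n + 1) × Fin α) :
    Fin (n + 1) × Fin α :=
  if p ∈ Q then (p.1, c) else p

section Collapse

variable {c : Fin α} {Q : Set (Fin (n + 1) × Fin α)}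

theorem collapse_of_mem {p} (hp : p ∈ Q) : collapse c Q p = (p.1, c) := if_pos hp

theorem collapse_of_notMem {p} (hp : p ∉ Q) : collapse c Q p = p := if_neg hp

theorem collapse_fst (p) : (collapse c Q p).1 = p.1 := by
  by_cases hp : p ∈ Q <;> simp [collapse, hp]

theorem collapse_base (i : Fin (n + 1)) : collapse c Q (i, c) = (i, c) := by
  by_cases hp : (i, c) ∈ Q <;> simp [collapse, hp]

theorem collapse_eq_iff {a p : Fin (n + 1) × Fin α} (ha : a.2 ≠ c) (haQ : a ∉ Q) :
    collapse c Q p = a ↔ p = a := by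
  by_cases hp : p ∈ Q
  · rw [collapse_of_mem hp]
    exact iff_of_false (fun h => ha (congrArg Prod.snd h).symm) (fun h => haQ (h ▸ hp))
  · rw [collapse_of_notMem hp]

variable (c Q) in
/-- The exponent vector of the image of the block monomial `∏ⱼ X (i, j)` under `collapse`. -/
noncomputable def blockExponent (i : Fin (n + 1)) : Fin (n + 1) × Fin α →₀ ℕ :=
  ∑ j : Fin α, Finsupp.single (collapse c Q (i, j)) 1

theorem blockExponent_apply_of_ne {a : Fin (n + 1) × Fin α} (ha : a.2 ≠ c) (haQ : a ∉ Q)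
    (i : Fin (n + 1)) : blockExponent c Q i a = if i = a.1 then 1 else 0 := by
  by_cases hi : i = a.1 <;>
    simp [blockExponent, Finsupp.single_apply, collapse_eq_iff ha haQ, Prod.ext_iff, hi]

theorem blockExponent_apply_base_eq_zero_iff (i i' : Fin (n + 1)) :
    blockExponent c Q i (i', c) = 0 ↔ i ≠ i' := by
  simp only [blockExponent, Finsupp.finsetSum_apply, Finset.sum_eq_zero_iff, Finset.mem_univ,
    true_implies, Finsupp.single_apply, ite_eq_right_iff, one_ne_zero, imp_false]
  exact ⟨fun h hi => h c (by rw [collapse_base, hi]),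
    fun h j hj => h (by simpa [collapse_fst] using congrArg Prod.fst hj)⟩

variable (c Q) in
noncomputable def edgeExponent (i : Fin n) : Fin (n + 1) × Fin α →₀ ℕ :=
  blockExponent c Q i.castSucc + blockExponent c Q i.succ

theorem rename_collapse_edgeMonomial (i : Fin n) :
    rename (collapse c Q) (edgeMonomial k i) = monomial (edgeExponent c Q i) 1 := by
  simp only [edgeMonomial, map_mul, map_prod, rename_X]
  rw [prod_X_eq_monomial, prod_X_eq_monomial, monomial_mul, one_mul]
  rfl

theorem map_rename_collapse_hyperlineIdeal :
    (hyperlineIdeal k n α).map (rename (collapse c Q)) =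
      Ideal.span ((monomial · 1) '' Set.range (edgeExponent c Q)) := by
  rw [hyperlineIdeal_eq_span, Ideal.map_span, ← Set.range_comp, ← Set.range_comp]
  simp only [Function.comp_def, rename_collapse_edgeMonomial]

theorem edgeExponent_apply {a : Fin (n + 1) × Fin α} (ha : a.2 ≠ c) (haQ : a ∉ Q) (i : Fin n) :
    edgeExponent c Q i a ≤ 1 ∧ (edgeExponent c Q i a = 0 ↔ edgeExponent c Q i (a.1, c) = 0) := by
  have hi : i.castSucc ≠ i.succ := Fin.castSucc_lt_succ.ne
  have h₁ := blockExponent_apply_base_eq_zero_iff (c := c) (Q := Q) i.castSucc a.1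
  have h₂ := blockExponent_apply_base_eq_zero_iff (c := c) (Q := Q) i.succ a.1
  simp only [edgeExponent, Finsupp.add_apply, blockExponent_apply_of_ne ha haQ] at h₁ h₂ ⊢
  split_ifs <;> simp_all

end Collapse

section Regular

variable {c : Fin α}

theorem mem_sup_span_of_blockDiff_mul_mem {Q : Set (Fin (n + 1) × Fin α)}
    {a : Fin (n + 1) × Fin α} (ha : a.2 ≠ c) (haQ : a ∉ Q) {f : MvPolynomial _ k}
    (hf : blockDiff k c a * f ∈ hyperlineIdeal k n α ⊔ Ideal.span (blockDiff k c '' Q)) :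
    f ∈ hyperlineIdeal k n α ⊔ Ideal.span (blockDiff k c '' Q) := by
  refine Ideal.mem_sup_of_mul_mem_sup_of_retraction (rename (collapse c Q)).toRingHom ?_ ?_ ?_
    (fun g hg => ?_) hf
  · rw [Ideal.span_le]
    rintro _ ⟨p, hp, rfl⟩
    simp [blockDiff, collapse_of_mem hp, collapse_base]
  · refine rename_sub_self_mem fun p => ?_
    by_cases hp : p ∈ Q
    · rw [collapse_of_mem hp, ← neg_sub]
      exact neg_mem (Ideal.subset_span ⟨p, hp, rfl⟩)
    · simp [collapse_of_notMem hp]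
  · simp [blockDiff, collapse_of_notMem haQ, collapse_base]
  · have hab : a ≠ (a.1, c) := fun h => ha (congrArg Prod.snd h)
    simp only [AlgHom.toRingHom_eq_coe, Ideal.map_coe, map_rename_collapse_hyperlineIdeal] at hg ⊢
    exact mem_span_monomial_of_X_sub_X_mul_mem hab
      (Set.forall_mem_range.mpr (edgeExponent_apply ha haQ)) hg

theorem hyperlineIdeal_sup_span_blockDiff_ne_top :
    hyperlineIdeal k n α ⊔ Ideal.span (Set.range (blockDiff k c)) ≠ ⊤ := by
  refine ne_top_of_le_ne_top (RingHom.ker_ne_top (constantCoeff (R := k))) ?_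
  rw [hyperlineIdeal_eq_span, ← Ideal.span_union, Ideal.span_le]
  rintro _ (⟨i, rfl⟩ | ⟨p, rfl⟩) <;> simp [edgeMonomial, blockDiff, c.pos.ne']

theorem isRegular_blockDiff {L : List (Fin (n + 1) × Fin α)} (hL : L.Nodup)
    (hLc : ∀ p ∈ L, p.2 ≠ c) :
    RingTheory.Sequence.IsRegular (MvPolynomial (Fin (n + 1) × Fin α) k ⧸ hyperlineIdeal k n α)
      ((L.map (blockDiff k c)).map (Ideal.Quotient.mk (hyperlineIdeal k n α))) := by
  have hofList (L' : List (Fin (n + 1) × Fin α)) :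
      Ideal.ofList (L'.map (blockDiff k c)) = Ideal.span (blockDiff k c '' {p | p ∈ L'}) := by
    simp [Ideal.ofList, Set.image, List.mem_map]
  refine Ideal.isRegular_map_mk_of_mul_mem_sup _ _ (fun i hi f hf => ?_) ?_
  · simp only [List.length_map] at hi
    have hnotMem : L[i] ∉ L.take i := by
      rw [List.mem_take_iff_getElem]
      rintro ⟨j, hj, hji⟩
      have := (hL.getElem_inj_iff).mp hji
      omega
    rw [← List.map_take, hofList, List.getElem_map] at hf
    rw [← List.map_take, hofList]
    exact mem_sup_span_of_blockDiff_mul_mem (hLc _ (List.getElem_mem hi)) hnotMem hf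
  · refine ne_top_of_le_ne_top (hyperlineIdeal_sup_span_blockDiff_ne_top (c := c)) ?_
    rw [hofList]
    exact sup_le_sup_left (Ideal.span_mono (Set.image_subset_range _ _)) _

end Regular

section Quotient

theorem ker_rename_fst (c : Fin α) :
    RingHom.ker (rename Prod.fst :
        MvPolynomial (Fin (n + 1) × Fin α) k →ₐ[k] MvPolynomial (Fin (n + 1)) k) =
      Ideal.span (Set.range (blockDiff k c)) := by
  refine le_antisymm (fun x hx => ?_) (Ideal.span_le.mpr ?_)
  · have hsub := rename_sub_self_mem (v := fun p => (p.1, c)) (g := x) fun p => by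
      simpa [blockDiff] using
        neg_mem (Ideal.subset_span (Set.mem_range_self (f := blockDiff k c) p))
    have hx0 : rename (fun p => (p.1, c)) x = 0 := by
      rw [← Function.comp_def (fun i => (i, c)) Prod.fst, ← rename_rename, RingHom.mem_ker.mp hx,
        map_zero]
    simpa [hx0] using hsub
  · rintro _ ⟨p, rfl⟩
    simp [blockDiff]

theorem map_rename_fst_hyperlineIdeal :
    (hyperlineIdeal k n α).map (rename Prod.fst) =
      Ideal.span (Set.range fun i : Fin n =>
        (X i.castSucc ^ α * X i.succ ^ α : MvPolynomial (Fin (n + 1)) k)) := by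
  rw [hyperlineIdeal_eq_span, Ideal.map_span, ← Set.range_comp]
  simp [Function.comp_def, edgeMonomial]

noncomputable def quotientBlockDiffEquiv (c : Fin α) :
    (MvPolynomial (Fin (n + 1) × Fin α) k ⧸
        (hyperlineIdeal k n α ⊔ Ideal.span (Set.range (blockDiff k c)))) ≃ₐ[k]
      MvPolynomial (Fin (n + 1)) k ⧸ Ideal.span (Set.range fun i : Fin n =>
        (X i.castSucc ^ α * X i.succ ^ α : MvPolynomial (Fin (n + 1)) k)) :=
  have : Nonempty (Fin α) := ⟨c⟩
  (Ideal.quotientEquivAlgOfEq k (by rw [ker_rename_fst c])).trans <|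
    (Ideal.quotientSupKerEquiv _ _ (rename_surjective _ Prod.fst_surjective)).trans
      (Ideal.quotientEquivAlgOfEq k map_rename_fst_hyperlineIdeal)

end Quotient

end Hyperline

open Hyperline in
theorem hyperline_regular_and_iso_general (k : Type) [Field k] (n α : ℕ) (hα : 1 ≤ α) :
    (∃ l : List (MvPolynomial (Fin (n + 1) × Fin α) k),
      l.length = (n + 1) * (α - 1) ∧ l.Nodup ∧
      (∀ x, x ∈ l ↔ x ∈ blockDifferences k n α hα) ∧
      RingTheory.Sequence.IsRegular
        (MvPolynomial (Fin (n + 1) × Fin α) k ⧸ hyperlineIdeal k n α)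
        (l.map (Ideal.Quotient.mk (hyperlineIdeal k n α)))) ∧
    Nonempty
      ((MvPolynomial (Fin (n + 1) × Fin α) k ⧸
          (hyperlineIdeal k n α ⊔ Ideal.span (blockDifferences k n α hα))) ≃ₐ[k]
        MvPolynomial (Fin (n + 1)) k ⧸
          Ideal.span (Set.range fun i : Fin n =>
            (X i.castSucc ^ α * X i.succ ^ α : MvPolynomial (Fin (n + 1)) k))) := by
  set c : Fin α := ⟨0, hα⟩
  set L := ((Finset.univ : Finset (Fin (n + 1))) ×ˢ Finset.univ.erase c).toList
  have hL : ∀ p, p ∈ L ↔ p.2 ≠ c := by simp [L]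
  refine ⟨⟨L.map (blockDiff k c), ?_, ?_, fun x => ?_, ?_⟩,
    ⟨(Ideal.quotientEquivAlgOfEq k (by rw [span_blockDifferences])).trans
      (quotientBlockDiffEquiv c)⟩⟩
  · simp [L, Finset.card_erase_of_mem]
  · exact (Finset.nodup_toList _).map_on fun p hp q hq =>
      blockDiff_injOn c ((hL p).1 hp) ((hL q).1 hq)
  · simp [blockDifferences_eq_image, hL, c]
  · exact isRegular_blockDiff (Finset.nodup_toList _) fun p hp => (hL p).1 hp

/-- The linear forms `v_{ik} - v_{il}` form a regular sequence of length `(n+1)(α-1)` on the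
hyperline algebra `L_n^{2α,α}`, and factoring them out yields a (graded) `k`-algebra
isomorphism `L_n^{2α,α}/(linear forms) ≅ k[x_1,…,x_{n+1}]/(x_1^α x_2^α, …, x_n^α x_{n+1}^α)`. -/
theorem hyperline_regular_and_iso (k : Type) [Field k] (n α : ℕ) (hn : 1 ≤ n) (hα : 1 ≤ α) :
    (∃ l : List (MvPolynomial (Fin (n + 1) × Fin α) k),
      l.length = (n + 1) * (α - 1) ∧ l.Nodup ∧
      (∀ x, x ∈ l ↔ x ∈ blockDifferences k n α hα) ∧
      RingTheory.Sequence.IsRegular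
        (MvPolynomial (Fin (n + 1) × Fin α) k ⧸ hyperlineIdeal k n α)
        (l.map (Ideal.Quotient.mk (hyperlineIdeal k n α)))) ∧
    Nonempty
      ((MvPolynomial (Fin (n + 1) × Fin α) k ⧸
          (hyperlineIdeal k n α ⊔ Ideal.span (blockDifferences k n α hα))) ≃ₐ[k]
        MvPolynomial (Fin (n + 1)) k ⧸
          Ideal.span (Set.range fun i : Fin n =>
            (X i.castSucc ^ α * X i.succ ^ α : MvPolynomial (Fin (n + 1)) k))) :=
  hyperline_regular_and_iso_general k n α hα
end

section
/- For 1 ≤ r ≤ i < n, (n/r)·C(i-1,r-1)·C(n-i-1,r-1) is an integer, equal to the number of ways to choose r disjoint arcs of total length i on a cycle of length n. -/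
set_option linter.unusedSectionVars false


open Finset

def lstarts (G : Finset ℕ) : Finset ℕ := G.filter fun j => j = 0 ∨ j - 1 ∉ G

def setA (m i r : ℕ) : Finset (Finset ℕ) :=
  (Finset.range m).powerset.filter fun G =>
    0 ∈ G ∧ m - 1 ∈ G ∧ G.card = i ∧ (lstarts G).card = r

def setB (m i r : ℕ) : Finset (Finset ℕ) :=
  (Finset.range m).powerset.filter fun G =>
    0 ∈ G ∧ m - 1 ∉ G ∧ G.card = i ∧ (lstarts G).card = r

lemma lstarts_subset (G : Finset ℕ) : lstarts G ⊆ G := filter_subset _ _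

lemma lstarts_insert {G : Finset ℕ} {k : ℕ} (hk0 : k ≠ 0) (hk : k ∉ G)
    (hk1 : k + 1 ∉ G) :
    (lstarts (insert k G)).card = (lstarts G).card + (if k - 1 ∈ G then 0 else 1) := by
  have hGfix : ∀ j ∈ G, ((j = 0 ∨ j - 1 ∉ insert k G) ↔ (j = 0 ∨ j - 1 ∉ G)) := by
    intro j hj
    have : j - 1 ≠ k ∨ j = 0 := by
      rcases Nat.eq_zero_or_pos j with h | h
      · exact Or.inr h
      · left; intro hek
        have : j = k + 1 := by omega
        exact hk1 (this ▸ hj)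
    constructor
    · rintro (h | h)
      · exact Or.inl h
      · exact Or.inr fun hm => h (mem_insert_of_mem hm)
    · rintro (h | h)
      · exact Or.inl h
      · rcases this with h' | h'
        · refine Or.inr fun hm => ?_
          rcases mem_insert.mp hm with he | he
          · exact h' he
          · exact h he
        · exact Or.inl h'
  have key : lstarts (insert k G) =
      if k - 1 ∈ G then lstarts G else insert k (lstarts G) := by
    unfold lstarts
    rw [filter_insert]
    have hfe : filter (fun j => j = 0 ∨ j - 1 ∉ insert k G) G
        = filter (fun j => j = 0 ∨ j - 1 ∉ G) G := filter_congr hGfix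
    have hkpred : (k = 0 ∨ k - 1 ∉ insert k G) ↔ k - 1 ∉ G := by
      constructor
      · rintro (h | h)
        · exact absurd h hk0
        · exact fun hm => h (mem_insert_of_mem hm)
      · intro h
        refine Or.inr fun hm => ?_
        rcases mem_insert.mp hm with he | he
        · omega
        · exact h he
    by_cases hp : k - 1 ∈ G
    · rw [if_neg (fun h => (hkpred.mp h) hp), if_pos hp, hfe]
    · rw [if_pos (hkpred.mpr hp), if_neg hp, hfe]
  rw [key]
  by_cases hp : k - 1 ∈ G
  · simp [hp]
  · rw [if_neg hp, if_neg hp, card_insert_of_notMem (fun h => hk (lstarts_subset _ h))]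

lemma setB_eq_union {m i r : ℕ} (hm : 2 ≤ m) :
    setB m i r = setA (m-1) i r ∪ setB (m-1) i r := by
  ext G
  simp only [setB, setA, mem_union, mem_filter, mem_powerset]
  constructor
  · rintro ⟨hsub, h0, hlast, hc, hs⟩
    have hsub' : G ⊆ Finset.range (m-1) := by
      intro x hx
      have := mem_range.mp (hsub hx)
      have : x ≠ m - 1 := fun h => hlast (h ▸ hx)
      rw [mem_range]; omega
    by_cases h2 : m - 1 - 1 ∈ G
    · exact Or.inl ⟨hsub', h0, h2, hc, hs⟩
    · exact Or.inr ⟨hsub', h0, h2, hc, hs⟩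
  · have hsub' : G ⊆ Finset.range (m-1) → (G ⊆ Finset.range m ∧ m - 1 ∉ G) := by
      intro h
      constructor
      · exact h.trans (by apply range_subset_range.mpr; omega)
      · intro hmem; have := mem_range.mp (h hmem); omega
    rintro (⟨hsub, h0, h2, hc, hs⟩ | ⟨hsub, h0, h2, hc, hs⟩)
    · exact ⟨(hsub' hsub).1, h0, (hsub' hsub).2, hc, hs⟩
    · exact ⟨(hsub' hsub).1, h0, (hsub' hsub).2, hc, hs⟩

lemma setB_card_rec {m i r : ℕ} (hm : 2 ≤ m) :
    (setB m i r).card = (setA (m-1) i r).card + (setB (m-1) i r).card := by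
  rw [setB_eq_union hm, card_union_of_disjoint]
  rw [disjoint_left]
  rintro G hA hB
  simp only [setA, setB, mem_filter] at hA hB
  exact hB.2.2.1 hA.2.2.1

lemma setA_card_rec {m i r : ℕ} (hm : 2 ≤ m) (hi : 2 ≤ i) (hr : 1 ≤ r) :
    (setA m i r).card = (setA (m-1) (i-1) r).card + (setB (m-1) (i-1) (r-1)).card := by
  have himg : setA m i r
      = (setA (m-1) (i-1) r ∪ setB (m-1) (i-1) (r-1)).image (insert (m-1)) := by
    ext G
    simp only [mem_image, mem_union, setA, setB, mem_filter, mem_powerset]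
    constructor
    · rintro ⟨hsub, h0, hlast, hc, hs⟩
      refine ⟨G.erase (m-1), ?_, ?_⟩
      · have hsub' : G.erase (m-1) ⊆ Finset.range (m-1) := by
          intro x hx
          have hx' := mem_erase.mp hx
          have := mem_range.mp (hsub hx'.2)
          rw [mem_range]; omega
        have h0' : 0 ∈ G.erase (m-1) := mem_erase.mpr ⟨by omega, h0⟩
        have hc' : (G.erase (m-1)).card = i - 1 := by
          rw [card_erase_of_mem hlast, hc]
        have hins : G = insert (m-1) (G.erase (m-1)) := by
          rw [insert_erase hlast]
        have hstep : (lstarts G).card = (lstarts (G.erase (m-1))).card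
            + (if m - 1 - 1 ∈ G.erase (m-1) then 0 else 1) := by
          conv_lhs => rw [hins]
          apply lstarts_insert (by omega) (notMem_erase _ _)
          intro hmem
          have := mem_range.mp (hsub (erase_subset _ _ hmem))
          omega
        have hmem_iff : m - 1 - 1 ∈ G.erase (m-1) ↔ m - 2 ∈ G := by
          rw [mem_erase]; constructor
          · rintro ⟨-, h⟩; rwa [show m - 1 - 1 = m - 2 by omega] at h
          · intro h; exact ⟨by omega, by rwa [show m - 1 - 1 = m - 2 by omega]⟩
        by_cases h2 : m - 2 ∈ G
        · left
          rw [if_pos (hmem_iff.mpr h2)] at hstep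
          exact ⟨hsub', h0', mem_erase.mpr ⟨by omega, h2⟩, hc', by omega⟩
        · right
          rw [if_neg (fun h => h2 (hmem_iff.mp h))] at hstep
          exact ⟨hsub', h0', fun h => h2 (mem_erase.mp h).2, hc', by omega⟩
      · rw [insert_erase hlast]
    · rintro ⟨G', (⟨hsub, h0, h2, hc, hs⟩ | ⟨hsub, h0, h2, hc, hs⟩), rfl⟩ <;>
      · have hnm : m - 1 ∉ G' := fun h => by
          have := mem_range.mp (hsub h); omega
        have hnm1 : m - 1 + 1 ∉ G' := fun h => by
          have := mem_range.mp (hsub h); omega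
        have hstep := lstarts_insert (G := G') (k := m-1) (by omega) hnm hnm1
        rw [show m - 1 - 1 = m - 2 by omega] at hstep
        refine ⟨?_, mem_insert_of_mem h0, mem_insert_self _ _, ?_, ?_⟩
        · intro x hx
          rcases mem_insert.mp hx with h | h
          · rw [mem_range]; omega
          · have := mem_range.mp (hsub h); rw [mem_range]; omega
        · rw [card_insert_of_notMem hnm, hc]; omega
        · rw [hstep]
          rw [show (m:ℕ) - 1 - 1 = m - 2 by omega] at h2
          first
          | (rw [if_pos h2]; omega)
          | (rw [if_neg h2]; omega)
  rw [himg, card_image_of_injOn, card_union_of_disjoint]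
  · rw [disjoint_left]
    rintro G hA hB
    simp only [setA, setB, mem_filter] at hA hB
    exact hB.2.2.1 hA.2.2.1
  · intro G1 h1 G2 h2 he
    have hn : ∀ G ∈ setA (m-1) (i-1) r ∪ setB (m-1) (i-1) (r-1), m - 1 ∉ G := by
      intro G hG hmem
      simp only [mem_union, setA, setB, mem_filter, mem_powerset] at hG
      rcases hG with ⟨hsub, _⟩ | ⟨hsub, _⟩ <;>
        · have := mem_range.mp (hsub hmem); omega
    have := congrArg (fun s => s.erase (m-1)) he
    simpa [erase_insert (hn G1 h1), erase_insert (hn G2 h2)] using this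

lemma setB_r0 (m i : ℕ) : setB m i 0 = ∅ := by
  apply eq_empty_of_forall_notMem
  intro G hG
  simp only [setB, mem_filter, mem_powerset] at hG
  obtain ⟨-, h0, -, -, hs⟩ := hG
  have : 0 ∈ lstarts G := mem_filter.mpr ⟨h0, Or.inl rfl⟩
  have := card_pos.mpr ⟨0, this⟩
  omega

lemma setA_i1 {m r : ℕ} (hm : 2 ≤ m) : setA m 1 r = ∅ := by
  apply eq_empty_of_forall_notMem
  intro G hG
  simp only [setA, mem_filter, mem_powerset] at hG
  obtain ⟨-, h0, hlast, hc, -⟩ := hG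
  have : ({0, m-1} : Finset ℕ) ⊆ G := by
    intro x hx; rcases mem_insert.mp hx with rfl | hx
    · exact h0
    · rwa [mem_singleton.mp hx]
  have h2 : ({0, m-1} : Finset ℕ).card = 2 := by
    rw [card_insert_of_notMem (by simp; omega), card_singleton]
  have := card_le_card this
  omega

def fA (i r m : ℕ) : ℕ :=
  if r = 1 then (if i = m then 1 else 0)
  else if m ≤ i then 0 else (i-1).choose (r-1) * (m-i-1).choose (r-2)

def fB (i r m : ℕ) : ℕ :=
  if m ≤ i then 0 else (i-1).choose (r-1) * (m-i-1).choose (r-1)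

lemma choose_pascal {a b a' b' : ℕ} (ha : a = a' + 1) (hb : b = b' + 1) :
    a.choose b = a'.choose b' + a'.choose b := by
  subst ha; subst hb; exact Nat.choose_succ_succ _ _

lemma fA_eval_r1 (i m : ℕ) : fA i 1 m = if i = m then 1 else 0 := by
  simp [fA]

lemma fA_eval2 {i r m : ℕ} (hr : 1 < r) (him : i < m) :
    fA i r m = (i-1).choose (r-1) * (m-i-1).choose (r-2) := by
  rw [fA, if_neg (by omega), if_neg (by omega)]

lemma fA_eval0 {i r m : ℕ} (hr : 1 < r) (him : m ≤ i) : fA i r m = 0 := by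
  rw [fA, if_neg (by omega), if_pos him]

lemma fB_eval {i r m : ℕ} (him : i < m) :
    fB i r m = (i-1).choose (r-1) * (m-i-1).choose (r-1) := by
  rw [fB, if_neg (by omega)]

lemma fB_eval0 {i r m : ℕ} (him : m ≤ i) : fB i r m = 0 := by
  rw [fB, if_pos him]

lemma lin_count (m i r : ℕ) (hr : 1 ≤ r) (hi : 1 ≤ i) :
    (setA m i r).card = fA i r m ∧ (setB m i r).card = fB i r m := by
  induction m using Nat.strong_induction_on generalizing i r with
  | _ m IH =>
  match m with
  | 0 =>
    have hA : setA 0 i r = ∅ := by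
      apply eq_empty_of_forall_notMem
      intro G hG
      simp only [setA, mem_filter, mem_powerset, Finset.range_zero,
        subset_empty] at hG
      rcases hG with ⟨rfl, h0, -⟩
      exact notMem_empty 0 h0
    have hB : setB 0 i r = ∅ := by
      apply eq_empty_of_forall_notMem
      intro G hG
      simp only [setB, mem_filter, mem_powerset, Finset.range_zero,
        subset_empty] at hG
      rcases hG with ⟨rfl, h0, -⟩
      exact notMem_empty 0 h0
    constructor
    · rw [hA, card_empty, fA]
      split
      · rw [if_neg (by omega)]
      · rw [if_pos (by omega)]
    · rw [hB, card_empty, fB, if_pos (by omega)]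
  | 1 =>
    have hB : setB 1 i r = ∅ := by
      apply eq_empty_of_forall_notMem
      intro G hG
      simp only [setB, mem_filter, mem_powerset] at hG
      exact hG.2.2.1 hG.2.1
    have hA : setA 1 i r = if i = 1 ∧ r = 1 then {{0}} else ∅ := by
      ext G
      simp only [setA, mem_filter, mem_powerset]
      constructor
      · rintro ⟨hsub, h0, -, hc, hs⟩
        have : G = {0} := by
          apply Finset.Subset.antisymm
          · intro x hx
            have := mem_range.mp (hsub hx)
            simp; omega
          · simp [h0]
        subst this
        have : lstarts {0} = {0} := by
          unfold lstarts; ext x; simp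
          rintro rfl; left; rfl
        rw [this] at hs
        simp at hc hs
        simp [← hc, ← hs]
      · intro hG
        split at hG
        · rename_i hir
          simp only [mem_singleton] at hG
          subst hG
          obtain ⟨rfl, rfl⟩ := hir
          have : lstarts {0} = {0} := by
            unfold lstarts; ext x; simp
            rintro rfl; left; rfl
          refine ⟨by simp, by simp, by simp, by simp, by rw [this]; simp⟩
        · exact absurd hG (notMem_empty _)
    constructor
    · rw [hA]
      by_cases h : i = 1 ∧ r = 1
      · obtain ⟨rfl, rfl⟩ := h
        rw [if_pos ⟨rfl, rfl⟩, fA_eval_r1, if_pos rfl]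
        simp
      · rw [if_neg h, card_empty]
        rcases eq_or_lt_of_le hr with hr1 | hr2
        · rw [← hr1] at h ⊢
          rw [fA_eval_r1, if_neg (fun hi1 => h ⟨hi1, rfl⟩)]
        · rcases eq_or_lt_of_le hi with hi1 | hi2
          · rw [← hi1, fA_eval0 hr2 le_rfl]
          · rw [fA_eval0 hr2 (by omega)]
    · rw [hB, card_empty, fB_eval0 (by omega)]
  | (m+2) =>
    have hm2 : 2 ≤ m + 2 := by omega
    have hmm : m + 2 - 1 = m + 1 := by omega
    have IHr := IH (m+1) (by omega)
    constructor
    · -- A part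
      rcases eq_or_lt_of_le hi with hi1 | hi2
      · -- i = 1
        rw [← hi1]
        rw [setA_i1 hm2, card_empty]
        rcases eq_or_lt_of_le hr with hr1 | hr2
        · rw [← hr1, fA_eval_r1, if_neg (by omega)]
        · rw [fA_eval2 (by omega) (by omega),
            Nat.choose_eq_zero_of_lt (by omega : (1:ℕ) - 1 < r - 1), zero_mul]
      · -- i ≥ 2
        rw [setA_card_rec hm2 hi2 hr, hmm]
        rcases eq_or_lt_of_le hr with hr1 | hr2
        · -- r = 1
          rw [← hr1]
          rw [(IHr (i-1) 1 le_rfl (by omega)).1, setB_r0, card_empty, add_zero,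
            fA_eval_r1, fA_eval_r1]
          by_cases h : i = m + 2
          · rw [if_pos (by omega), if_pos (by omega)]
          · rw [if_neg (by omega), if_neg (by omega)]
        · -- r ≥ 2
          rw [(IHr (i-1) r hr (by omega)).1,
            (IHr (i-1) (r-1) (by omega) (by omega)).2]
          by_cases him : m + 2 ≤ i
          · rw [fA_eval0 hr2 (by omega), fB_eval0 (by omega), fA_eval0 hr2 (by omega)]
          · rw [fA_eval2 hr2 (by omega), fB_eval (by omega), fA_eval2 (by omega) (by omega)]
            have e1 : (i:ℕ) - 1 - 1 = i - 2 := by omega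
            have e2 : (r:ℕ) - 1 - 1 = r - 2 := by omega
            have e3 : m + 1 - (i - 1) - 1 = m + 2 - i - 1 := by omega
            rw [e1, e2, e3,
              choose_pascal (show (i:ℕ) - 1 = (i-2)+1 by omega)
                (show (r:ℕ) - 1 = (r-2)+1 by omega)]
            ring
    · -- B part
      rw [setB_card_rec hm2, hmm,
        (IHr i r hr hi).1, (IHr i r hr hi).2]
      rcases eq_or_lt_of_le hr with hr1 | hr2
      · -- r = 1
        rw [← hr1]
        have c0 : (1:ℕ) - 1 = 0 := rfl
        by_cases him : m + 2 ≤ i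
        · rw [fA_eval_r1, if_neg (by omega), fB_eval0 (by omega), fB_eval0 (by omega)]
        · by_cases him1 : i = m + 1
          · rw [fA_eval_r1, if_pos him1, fB_eval0 (by omega), fB_eval (by omega),
              c0]
            simp
          · rw [fA_eval_r1, if_neg him1, fB_eval (by omega), fB_eval (by omega),
              c0]
            simp
      · -- r ≥ 2
        by_cases him : m + 2 ≤ i
        · rw [fA_eval0 hr2 (by omega), fB_eval0 (by omega), fB_eval0 (by omega)]
        · by_cases him1 : i = m + 1
          · rw [fA_eval0 hr2 (by omega), fB_eval0 (by omega), fB_eval (by omega),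
              show m + 2 - i - 1 = 0 by omega,
              Nat.choose_eq_zero_of_lt (by omega : (0:ℕ) < r - 1), mul_zero]
            rfl
          · rw [fA_eval2 hr2 (by omega), fB_eval (by omega), fB_eval (by omega),
              choose_pascal (show m + 2 - i - 1 = (m + 1 - i - 1) + 1 by omega)
                (show (r:ℕ) - 1 = (r-2)+1 by omega)]
            ring

section Circ

variable {n : ℕ} [NeZero n]

lemma cast_val_eq (x : ZMod n) : ((x.val : ℕ) : ZMod n) = x :=
  ZMod.natCast_rightInverse x

lemma cast_inj_lt {k l : ℕ} (hk : k < n) (hl : l < n)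
    (h : ((k : ZMod n) = (l : ZMod n))) : k = l := by
  have := congrArg ZMod.val h
  rwa [ZMod.val_cast_of_lt hk, ZMod.val_cast_of_lt hl] at this

lemma cast_pred {k : ℕ} (hk : 1 ≤ k) : ((k - 1 : ℕ) : ZMod n) = (k : ZMod n) - 1 := by
  rw [Nat.cast_sub hk, Nat.cast_one]

lemma cast_n_pred (hn : 1 ≤ n) : ((n - 1 : ℕ) : ZMod n) = -1 := by
  rw [Nat.cast_sub hn, Nat.cast_one, ZMod.natCast_self, zero_sub]

lemma subval_inj (j : ZMod n) : Function.Injective (fun x : ZMod n => (x - j).val) :=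
  fun a b h => by
    have := ZMod.val_injective n h
    exact sub_left_injective this

lemma phi_mem {F : Finset (ZMod n)} {j : ZMod n} (hj : j ∈ F) (hj1 : j - 1 ∉ F) :
    (F.image fun x => (x - j).val) ∈
      setB n F.card ((F.filter fun x => x - 1 ∉ F).card) := by
  have hn1 : 1 ≤ n := Nat.one_le_iff_ne_zero.mpr (NeZero.ne n)
  set G := F.image fun x => (x - j).val with hGdef
  have hmemG : ∀ k, k ∈ G ↔ ∃ x ∈ F, (x - j).val = k := by
    intro k; simp [hGdef]
  simp only [setB, mem_filter, mem_powerset]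
  refine ⟨?_, ?_, ?_, ?_, ?_⟩
  · intro k hk
    obtain ⟨x, -, rfl⟩ := (hmemG k).mp hk
    exact mem_range.mpr (ZMod.val_lt _)
  · exact (hmemG 0).mpr ⟨j, hj, by simp⟩
  · intro hmem
    obtain ⟨x, hx, hval⟩ := (hmemG _).mp hmem
    have : x - j = ((n - 1 : ℕ) : ZMod n) := by
      rw [← hval, cast_val_eq]
    rw [cast_n_pred hn1] at this
    rw [sub_eq_iff_eq_add, neg_add_eq_sub] at this
    exact hj1 (this ▸ hx)
  · exact card_image_of_injective F (subval_inj j)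
  · have himg : lstarts G = (F.filter fun x => x - 1 ∉ F).image fun x => (x - j).val := by
      ext k
      simp only [lstarts, mem_filter, mem_image]
      constructor
      · rintro ⟨hkG, hcond⟩
        obtain ⟨x, hx, rfl⟩ := (hmemG k).mp hkG
        refine ⟨x, ⟨hx, ?_⟩, rfl⟩
        rcases hcond with h0 | hpred
        · have : x - j = 0 := by
            have := congrArg (fun t : ℕ => (t : ZMod n)) h0
            simpa [cast_val_eq] using this
          have hxj : x = j := by
            have := congrArg (· + j) this
            simpa [sub_add_cancel] using this
          subst hxj; exact hj1
        · intro hx1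
          apply hpred
          refine (hmemG _).mpr ⟨x - 1, hx1, ?_⟩
          have hk0 : (x - j).val ≠ 0 := by
            intro h0
            have : x - j = 0 := by
              have := congrArg (fun t : ℕ => (t : ZMod n)) h0
              simpa [cast_val_eq] using this
            have hxj : x = j := by
              have := congrArg (· + j) this
              simpa [sub_add_cancel] using this
            subst hxj
            exact hj1 hx1
          have : x - 1 - j = (((x - j).val - 1 : ℕ) : ZMod n) := by
            rw [cast_pred (by omega), cast_val_eq]; ring
          rw [this, ZMod.val_cast_of_lt (by have := ZMod.val_lt (x - j); omega)]
      · rintro ⟨x, ⟨hx, hx1⟩, rfl⟩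
        refine ⟨(hmemG _).mpr ⟨x, hx, rfl⟩, ?_⟩
        by_cases h0 : (x - j).val = 0
        · exact Or.inl h0
        · refine Or.inr fun hmem => ?_
          obtain ⟨y, hy, hyval⟩ := (hmemG _).mp hmem
          apply hx1
          have : y - j = x - 1 - j := by
            have e1 : y - j = (((x - j).val - 1 : ℕ) : ZMod n) := by
              rw [← hyval, cast_val_eq]
            rw [e1, cast_pred (by omega), cast_val_eq]; ring
          have : y = x - 1 := by
            have := congrArg (· + j) this
            simpa [sub_add_cancel] using this
          exact this ▸ hy
    rw [himg, card_image_of_injective _ (subval_inj j)]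

lemma cast_add_injOn {j : ZMod n} {G : Finset ℕ} (hsub : G ⊆ Finset.range n) :
    Set.InjOn (fun k : ℕ => (k : ZMod n) + j) ↑G := by
  intro k hk l hl h
  have hk' := mem_range.mp (hsub hk)
  have hl' := mem_range.mp (hsub hl)
  exact cast_inj_lt hk' hl' (by simpa using h)

lemma psi_mem {G : Finset ℕ} {i r : ℕ} (hG : G ∈ setB n i r) (j : ZMod n) :
    (G.image fun k : ℕ => ((k : ZMod n) + j)).card = i ∧
    ((G.image fun k : ℕ => ((k : ZMod n) + j)).filter
        fun x => x - 1 ∉ (G.image fun k : ℕ => ((k : ZMod n) + j)))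
      = (lstarts G).image (fun k : ℕ => (k : ZMod n) + j) := by
  have hn1 : 1 ≤ n := Nat.one_le_iff_ne_zero.mpr (NeZero.ne n)
  simp only [setB, mem_filter, mem_powerset] at hG
  obtain ⟨hsub, h0, hlast, hc, hs⟩ := hG
  set F := G.image fun k : ℕ => ((k : ZMod n) + j) with hFdef
  have hmemF : ∀ x, x ∈ F ↔ ∃ k ∈ G, ((k : ZMod n) + j) = x := by
    intro x; simp [hFdef]
  constructor
  · rw [card_image_of_injOn (cast_add_injOn hsub), hc]
  · ext x
    simp only [mem_filter, mem_image]
    constructor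
    · rintro ⟨hxF, hx1⟩
      obtain ⟨k, hk, rfl⟩ := (hmemF x).mp hxF
      refine ⟨k, ?_, rfl⟩
      rw [show lstarts G = G.filter (fun j => j = 0 ∨ j - 1 ∉ G) from rfl, mem_filter]
      refine ⟨hk, ?_⟩
      by_cases hk0 : k = 0
      · exact Or.inl hk0
      · refine Or.inr fun hk1 => ?_
        apply hx1
        refine (hmemF _).mpr ⟨k - 1, hk1, ?_⟩
        rw [cast_pred (by omega)]; ring
    · rintro ⟨k, hk, rfl⟩
      rw [show lstarts G = G.filter (fun j => j = 0 ∨ j - 1 ∉ G) from rfl, mem_filter] at hk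
      obtain ⟨hkG, hcond⟩ := hk
      refine ⟨(hmemF _).mpr ⟨k, hkG, rfl⟩, fun hmem => ?_⟩
      obtain ⟨l, hl, hle⟩ := (hmemF _).mp hmem
      have hlval : (l : ZMod n) = (k : ZMod n) - 1 := by
        have := congrArg (· - j) hle
        simpa [add_sub_cancel_right, sub_sub] using this
      have hln := mem_range.mp (hsub hl)
      rcases hcond with hk0 | hk1
      · subst hk0
        have : (l : ZMod n) = ((n - 1 : ℕ) : ZMod n) := by
          rw [hlval, cast_n_pred hn1]; simp
        exact hlast (cast_inj_lt hln (by omega) this ▸ hl)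
      · have hkn := mem_range.mp (hsub hkG)
        have hk0 : k ≠ 0 := by
          intro h; subst h; exact hk1 (by simpa using hkG)
        have : (l : ZMod n) = ((k - 1 : ℕ) : ZMod n) := by
          rw [hlval, cast_pred (by omega)]
        exact hk1 (cast_inj_lt hln (by omega) this ▸ hl)

lemma sigma_card (i r : ℕ) :
    ((Finset.univ.filter fun F : Finset (ZMod n) =>
        F.card = i ∧ (F.filter fun x => x - 1 ∉ F).card = r).sigma
          fun F => F.filter fun x => x - 1 ∉ F).card
      = n * (setB n i r).card := by
  have hprod : ((Finset.univ : Finset (ZMod n)) ×ˢ setB n i r).card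
      = n * (setB n i r).card := by
    rw [card_product, Finset.card_univ, ZMod.card]
  rw [← hprod]
  apply card_bij' (i := fun a _ => ((a.2, a.1.image fun x => (x - a.2).val) :
      ZMod n × Finset ℕ))
    (j := fun p _ => (⟨p.2.image fun k : ℕ => ((k : ZMod n) + p.1), p.1⟩ :
      (_ : Finset (ZMod n)) × ZMod n))
  · rintro ⟨F, j⟩ ha
    rw [mem_sigma] at ha
    obtain ⟨hF, hj⟩ := ha
    rw [mem_filter] at hF hj
    obtain ⟨-, hci, hcr⟩ := hF
    obtain ⟨hjF, hj1⟩ := hj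
    rw [mem_product]
    exact ⟨mem_univ _, by rw [← hci, ← hcr]; exact phi_mem hjF hj1⟩
  · rintro ⟨j, G⟩ hp
    rw [mem_product] at hp
    obtain ⟨-, hG⟩ := hp
    obtain ⟨hcard, hfilt⟩ := psi_mem hG j
    have hGm := hG
    simp only [setB, mem_filter, mem_powerset] at hGm
    obtain ⟨hsub, h0, hlast, hc, hs⟩ := hGm
    rw [mem_sigma]
    constructor
    · rw [mem_filter]
      refine ⟨mem_univ _, hcard, ?_⟩
      rw [hfilt, card_image_of_injOn
        (cast_add_injOn ((lstarts_subset G).trans hsub)), hs]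
    · rw [hfilt, mem_image]
      exact ⟨0, mem_filter.mpr ⟨h0, Or.inl rfl⟩, by simp⟩
  · rintro ⟨F, j⟩ -
    simp only
    congr 1
    rw [Finset.image_image]
    rw [Finset.image_congr (g := id), Finset.image_id]
    intro x _
    simp [cast_val_eq]
  · rintro ⟨j, G⟩ hp
    rw [mem_product] at hp
    have hsub : G ⊆ Finset.range n := by
      have := hp.2
      simp only [setB, mem_filter, mem_powerset] at this
      exact this.1
    simp only
    congr 1
    rw [Finset.image_image]
    rw [Finset.image_congr (g := id), Finset.image_id]
    intro k hk
    simp only [Function.comp, id]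
    rw [add_sub_cancel_right, ZMod.val_cast_of_lt (mem_range.mp (hsub hk))]

end Circ

/-- For `1 ≤ r ≤ i < n`, `r` divides `n·C(i-1,r-1)·C(n-i-1,r-1)`, and the quotient
`(n/r)·C(i-1,r-1)·C(n-i-1,r-1)` counts the ways to place `r` pairwise disjoint nonempty arcs
with `i` edges in total on a labeled `n`-cycle.  Here a configuration is recorded by its set
`F` of edges (edge `j` of the cycle joining vertices `j` and `j+1` of `ZMod n`), with `i` edges
and `r` maximal runs. -/
theorem hypercycle_betti_count (n i r : ℕ) (hr : 1 ≤ r) (hri : r ≤ i) (hin : i < n) :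
    r ∣ n * (i - 1).choose (r - 1) * (n - i - 1).choose (r - 1) ∧
    n * (i - 1).choose (r - 1) * (n - i - 1).choose (r - 1) / r =
      {F : Finset (ZMod n) |
        F.card = i ∧ (F.filter fun j => j - 1 ∉ F).card = r}.ncard := by
  haveI : NeZero n := ⟨by omega⟩
  set S := Finset.univ.filter fun F : Finset (ZMod n) =>
    F.card = i ∧ (F.filter fun j => j - 1 ∉ F).card = r with hS
  have hkey : r * S.card = n * ((i-1).choose (r-1) * (n-i-1).choose (r-1)) := by
    have h1 : (S.sigma fun F => F.filter fun x => x - 1 ∉ F).card = r * S.card := by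
      rw [card_sigma,
        Finset.sum_congr rfl (fun F hF => (Finset.mem_filter.mp hF).2.2),
        Finset.sum_const, smul_eq_mul, mul_comm]
    have h2 := sigma_card (n := n) i r
    have h3 : (setB n i r).card = (i-1).choose (r-1) * (n-i-1).choose (r-1) := by
      rw [(lin_count n i r hr (by omega)).2, fB_eval hin]
    rw [← h3, ← h2, ← h1]
  have hmain : n * (i - 1).choose (r - 1) * (n - i - 1).choose (r - 1) = r * S.card := by
    rw [mul_assoc, ← hkey]
  constructor
  · exact ⟨S.card, hmain⟩
  · rw [hmain, Nat.mul_div_cancel_left _ (by omega : 0 < r)]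
    have hset : {F : Finset (ZMod n) |
        F.card = i ∧ (F.filter fun j => j - 1 ∉ F).card = r} = ↑S := by
      ext F; simp [hS]
    rw [hset, Set.ncard_coe_finset]
end
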